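/- arXiv:2205.07788 — 9 statements merged into one kernel-verified Lean document; each statement's English description precedes it below -/
import Mathlib

section
/- Let m ≥ 1 and let φ : Finset (Fin m) → ℕ with φ(∅) = 0. Suppose {I_1, …, I_l} and {J_1, …, J_{l'}} are two partitions of Fin m into nonempty subsets such that: (i) φ(I) = Σ_k φ(I ∩ I_k) and φ(I) = Σ_{k'} φ(I ∩ J_{k'}) for every I ⊆ Fin m, and (ii) each block is φ-indecomposable, i.e. for every block C of either partition and every partition C = A ⊔ B with A, B nonempty there exists I ⊆ C with φ(I) ≠ φ(I ∩ A) + φ(I ∩ B). Then for every k and k', either I_k ∩ J_{k'} = ∅ or I_k = J_{k'}; in particular the two partitions coincide. -/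
lemma aux_subset (m l' : ℕ) (φ : Finset (Fin m) → ℕ) (hφ : φ ∅ = 0)
    (C : Finset (Fin m)) (J : Fin l' → Finset (Fin m))
    (hJdisj : ∀ k k', k ≠ k' → Disjoint (J k) (J k'))
    (hJsum : ∀ S : Finset (Fin m), φ S = ∑ k', φ (S ∩ J k'))
    (hindec : ∀ A B : Finset (Fin m), A ∪ B = C → Disjoint A B →
      A ≠ ∅ → B ≠ ∅ → ∃ S ⊆ C, φ S ≠ φ (S ∩ A) + φ (S ∩ B))
    (k' : Fin l') (hne : C ∩ J k' ≠ ∅) : C ⊆ J k' := by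
  set A := C ∩ J k' with hA
  set B := C \ J k' with hB
  by_cases hBe : B = ∅
  · intro x hx
    have : x ∈ A := by
      by_contra hxA
      have : x ∈ B := by
        simp only [hB, Finset.mem_sdiff]
        exact ⟨hx, fun h => hxA (Finset.mem_inter.mpr ⟨hx, h⟩)⟩
      simp [hBe] at this
    exact (Finset.mem_inter.mp this).2
  · exfalso
    obtain ⟨S, hS, hSne⟩ := hindec A B (by
        ext x; simp only [hA, hB, Finset.mem_union, Finset.mem_inter, Finset.mem_sdiff]
        tauto)
      (Finset.disjoint_left.mpr (by
        intro x hxA hxB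
        simp only [hA, Finset.mem_inter] at hxA
        simp only [hB, Finset.mem_sdiff] at hxB
        exact hxB.2 hxA.2)) hne hBe
    apply hSne
    have hSA : S ∩ A = S ∩ J k' := by
      ext x; simp only [hA, Finset.mem_inter]
      exact ⟨fun ⟨h1, _, h3⟩ => ⟨h1, h3⟩, fun ⟨h1, h2⟩ => ⟨h1, hS h1, h2⟩⟩
    have hSB : ∀ j : Fin l', (S ∩ B) ∩ J j = if j = k' then ∅ else S ∩ J j := by
      intro j
      rcases eq_or_ne j k' with h | h
      · subst h
        rw [if_pos rfl]
        ext x; simp only [Finset.mem_inter, hB, Finset.mem_sdiff, Finset.notMem_empty]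
        tauto
      · rw [if_neg h]
        ext x; simp only [Finset.mem_inter, hB, Finset.mem_sdiff]
        constructor
        · tauto
        · intro ⟨h1, h2⟩
          exact ⟨⟨h1, hS h1, fun hk' => (Finset.disjoint_left.mp (hJdisj j k' h) h2) hk'⟩, h2⟩
    have e1 : φ (S ∩ B) = ∑ j, φ ((S ∩ B) ∩ J j) := hJsum _
    have e2 : φ S = ∑ j, φ (S ∩ J j) := hJsum _
    rw [hSA, e1, e2]
    rw [← Finset.add_sum_erase _ _ (Finset.mem_univ k'),
        ← Finset.add_sum_erase _ (fun j => φ ((S ∩ B) ∩ J j)) (Finset.mem_univ k')]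
    rw [show (S ∩ B) ∩ J k' = ∅ from by rw [hSB]; simp, hφ, zero_add]
    congr 1
    apply Finset.sum_congr rfl
    intro j hj
    rw [hSB, if_neg (Finset.mem_erase.mp hj).1]


/-- a function `φ` on subsets of `Fin m` with `φ ∅ = 0` admits, up to order,
at most one partition of `Fin m` into nonempty φ-additive φ-indecomposable blocks:
blocks of two such partitions are disjoint or equal, and the partitions coincide. -/
theorem partition_unique (m l l' : ℕ) (hm : 1 ≤ m) (hl : 1 ≤ l) (hl' : 1 ≤ l')
    (φ : Finset (Fin m) → ℕ) (hφ : φ ∅ = 0)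
    (I : Fin l → Finset (Fin m)) (J : Fin l' → Finset (Fin m))
    (hIne : ∀ k, I k ≠ ∅) (hJne : ∀ k', J k' ≠ ∅)
    (hIdisj : ∀ k k', k ≠ k' → Disjoint (I k) (I k'))
    (hJdisj : ∀ k k', k ≠ k' → Disjoint (J k) (J k'))
    (hIcover : Finset.univ.biUnion I = Finset.univ)
    (hJcover : Finset.univ.biUnion J = Finset.univ)
    (hIsum : ∀ S : Finset (Fin m), φ S = ∑ k, φ (S ∩ I k))
    (hJsum : ∀ S : Finset (Fin m), φ S = ∑ k', φ (S ∩ J k'))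
    (hIindec : ∀ k, ∀ A B : Finset (Fin m), A ∪ B = I k → Disjoint A B →
      A ≠ ∅ → B ≠ ∅ → ∃ S ⊆ I k, φ S ≠ φ (S ∩ A) + φ (S ∩ B))
    (hJindec : ∀ k', ∀ A B : Finset (Fin m), A ∪ B = J k' → Disjoint A B →
      A ≠ ∅ → B ≠ ∅ → ∃ S ⊆ J k', φ S ≠ φ (S ∩ A) + φ (S ∩ B)) :
    (∀ k k', I k ∩ J k' = ∅ ∨ I k = J k') ∧ Set.range I = Set.range J := by
  have main : ∀ k k', I k ∩ J k' ≠ ∅ → I k = J k' := by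
    intro k k' h
    apply Finset.Subset.antisymm
    · exact aux_subset m l' φ hφ (I k) J hJdisj hJsum (hIindec k) k' h
    · exact aux_subset m l φ hφ (J k') I hIdisj hIsum (hJindec k') k
        (by rw [Finset.inter_comm]; exact h)
  constructor
  · intro k k'
    by_cases h : I k ∩ J k' = ∅
    · exact Or.inl h
    · exact Or.inr (main k k' h)
  · ext C
    simp only [Set.mem_range]
    constructor
    · rintro ⟨k, rfl⟩
      obtain ⟨a, ha⟩ := Finset.nonempty_iff_ne_empty.mpr (hIne k)
      have : a ∈ Finset.univ.biUnion J := hJcover ▸ Finset.mem_univ a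
      obtain ⟨k', _, hk'⟩ := Finset.mem_biUnion.mp this
      exact ⟨k', (main k k' (Finset.nonempty_iff_ne_empty.mp ⟨a, Finset.mem_inter.mpr ⟨ha, hk'⟩⟩)).symm⟩
    · rintro ⟨k', rfl⟩
      obtain ⟨a, ha⟩ := Finset.nonempty_iff_ne_empty.mpr (hJne k')
      have : a ∈ Finset.univ.biUnion I := hIcover ▸ Finset.mem_univ a
      obtain ⟨k, _, hk⟩ := Finset.mem_biUnion.mp this
      exact ⟨k, main k k' (Finset.nonempty_iff_ne_empty.mp ⟨a, Finset.mem_inter.mpr ⟨hk, ha⟩⟩)⟩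
end

section
/- Let v : Fin 5 → ℙ(K^4) with dim span_v(Fin 5) = 3. Then v is essentially indecomposable if and only if there exist four distinct indices a, b, c, d in Fin 5 such that every 3-element subset I of {a, b, c, d} satisfies dim span_v(I) = 3. -/
open scoped LinearAlgebra.Projectivization

/-- The subspace of `Fin n → K` spanned by the lines `v i` for `i ∈ I`. -/
noncomputable def spanV {K : Type*} [Field K] {n m : ℕ}
    (v : Fin m → ℙ K (Fin n → K)) (I : Finset (Fin m)) : Submodule K (Fin n → K) :=
  ⨆ i ∈ I, (v i).submodule

/-- The rank matrix of a tuple of points in projective space. -/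
noncomputable def rankMatrix {K : Type*} [Field K] {n m : ℕ}
    (v : Fin m → ℙ K (Fin n → K)) (I : Finset (Fin m)) : ℕ :=
  Module.finrank K (spanV v I)

/-- A tuple is essentially indecomposable. -/
def EssIndec {K : Type*} [Field K] {n m : ℕ} (v : Fin m → ℙ K (Fin n → K)) : Prop :=
  ¬ ∃ A B : Finset (Fin m), A ≠ ∅ ∧ B ≠ ∅ ∧ Disjoint A B ∧ A ∪ B = Finset.univ ∧
      spanV v A ⊓ spanV v B = ⊥

open Submodule Module

section GenericLinearAlgebra

variable {K : Type*} [Field K] {V : Type*} [AddCommGroup V] [Module K V]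

theorem li3_perm {x y z : V} (h : LinearIndependent K ![x, y, z]) (σ : Fin 3 → Fin 3)
    (hσ : Function.Injective σ) :
    LinearIndependent K ![![x,y,z] (σ 0), ![x,y,z] (σ 1), ![x,y,z] (σ 2)] := by
  have h2 := h.comp σ hσ
  have : ![x,y,z] ∘ σ = ![![x,y,z] (σ 0), ![x,y,z] (σ 1), ![x,y,z] (σ 2)] := by
    funext k; fin_cases k <;> rfl
  rwa [this] at h2

theorem li_pair_of_li3 {x y z : V} (h : LinearIndependent K ![x, y, z]) (i j : Fin 3)
    (hij : i ≠ j) : LinearIndependent K ![![x,y,z] i, ![x,y,z] j] := by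
  have hinj : Function.Injective ![i, j] := by
    intro a b hab
    fin_cases a <;> fin_cases b <;> simp_all
  have h2 := h.comp ![i, j] hinj
  have : ![x,y,z] ∘ ![i,j] = ![![x,y,z] i, ![x,y,z] j] := by
    funext k; fin_cases k <;> rfl
  rwa [this] at h2

theorem mem_span_pair_of_not_li {x y z : V} (hpair : LinearIndependent K ![x, y])
    (h : ¬ LinearIndependent K ![x, y, z]) : z ∈ span K {x, y} := by
  by_contra hz
  apply h
  rw [Fintype.linearIndependent_iff]
  intro g hg
  rw [Fin.sum_univ_three] at hg
  simp only [Matrix.cons_val_zero, Matrix.cons_val_one, Matrix.head_cons,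
    Matrix.cons_val_two, Matrix.tail_cons] at hg
  have hg2 : g 2 = 0 := by
    by_contra h2
    apply hz
    have hmem : g 2 • z ∈ span K ({x, y} : Set V) := by
      rw [(eq_neg_of_add_eq_zero_right hg : g 2 • z = -(g 0 • x + g 1 • y))]
      exact neg_mem (add_mem (smul_mem _ _ (subset_span (by simp)))
        (smul_mem _ _ (subset_span (by simp))))
    have := smul_mem _ (g 2)⁻¹ hmem
    rwa [inv_smul_smul₀ h2] at this
  rw [hg2, zero_smul, add_zero] at hg
  have hp := Fintype.linearIndependent_iff.1 hpair ![g 0, g 1]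
    (by rw [Fin.sum_univ_two]; simpa using hg)
  intro i
  fin_cases i
  · exact hp 0
  · exact hp 1
  · exact hg2

theorem span_singleton_inf_span_pair {x y z : V} (h : LinearIndependent K ![x, y, z]) :
    (K ∙ x) ⊓ span K {y, z} = ⊥ := by
  rw [eq_bot_iff]
  rintro u ⟨hu1, hu2⟩
  obtain ⟨a, rfl⟩ := Submodule.mem_span_singleton.1 hu1
  obtain ⟨b, c, hbc⟩ := Submodule.mem_span_pair.1 hu2
  have h0 : a • x + (-b) • y + (-c) • z = 0 := by
    rw [neg_smul, neg_smul, ← sub_eq_add_neg, ← sub_eq_add_neg, sub_sub, hbc, sub_self]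
  have := Fintype.linearIndependent_iff.1 h ![a, -b, -c]
    (by rw [Fin.sum_univ_three]; simpa using h0) 0
  simp only [Matrix.cons_val_zero] at this
  simp [this, Submodule.mem_bot]

end GenericLinearAlgebra

theorem quad_cases {α : Type*} [DecidableEq α] {p q r s : α}
    (hpq : p ≠ q) (hpr : p ≠ r) (hps : p ≠ s) (hqr : q ≠ r) (hqs : q ≠ s) (hrs : r ≠ s)
    {I : Finset α} (hI : I ⊆ {p, q, r, s}) (hc : I.card = 3) :
    I = {q, r, s} ∨ I = {p, r, s} ∨ I = {p, q, s} ∨ I = {p, q, r} := by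
  have hcard : ({p, q, r, s} : Finset α).card = 4 := by
    rw [Finset.card_insert_of_notMem (by simp [hpq, hpr, hps]),
      Finset.card_insert_of_notMem (by simp [hqr, hqs]),
      Finset.card_insert_of_notMem (by simp [hrs]), Finset.card_singleton]
  have hsd : (({p, q, r, s} : Finset α) \ I).Nonempty := by
    rw [← Finset.card_pos, Finset.card_sdiff_of_subset hI, hcard, hc]; norm_num
  obtain ⟨x, hx⟩ := hsd
  rw [Finset.mem_sdiff] at hx
  obtain ⟨hxq, hxI⟩ := hx
  have hIe : I = ({p, q, r, s} : Finset α).erase x := by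
    apply Finset.eq_of_subset_of_card_le
    · intro i hi
      exact Finset.mem_erase.2 ⟨fun h => hxI (h ▸ hi), hI hi⟩
    · rw [Finset.card_erase_of_mem hxq, hcard, hc]
  simp only [Finset.mem_insert, Finset.mem_singleton] at hxq
  rcases hxq with rfl | rfl | rfl | rfl
  · left
    rw [hIe]
    ext a
    simp only [Finset.mem_erase, Finset.mem_insert, Finset.mem_singleton]
    constructor
    · rintro ⟨h1, h2⟩; tauto
    · rintro (rfl | rfl | rfl)
      exacts [⟨hpq.symm, by tauto⟩, ⟨hpr.symm, by tauto⟩, ⟨hps.symm, by tauto⟩]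
  · right; left
    rw [hIe]
    ext a
    simp only [Finset.mem_erase, Finset.mem_insert, Finset.mem_singleton]
    constructor
    · rintro ⟨h1, h2⟩; tauto
    · rintro (rfl | rfl | rfl)
      exacts [⟨hpq, by tauto⟩, ⟨hqr.symm, by tauto⟩, ⟨hqs.symm, by tauto⟩]
  · right; right; left
    rw [hIe]
    ext a
    simp only [Finset.mem_erase, Finset.mem_insert, Finset.mem_singleton]
    constructor
    · rintro ⟨h1, h2⟩; tauto
    · rintro (rfl | rfl | rfl)
      exacts [⟨hpr, by tauto⟩, ⟨hqr, by tauto⟩, ⟨hrs.symm, by tauto⟩]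
  · right; right; right
    rw [hIe]
    ext a
    simp only [Finset.mem_erase, Finset.mem_insert, Finset.mem_singleton]
    constructor
    · rintro ⟨h1, h2⟩; tauto
    · rintro (rfl | rfl | rfl)
      exacts [⟨hps, by tauto⟩, ⟨hqs, by tauto⟩, ⟨hrs, by tauto⟩]

section SpanVLemmas

variable {K : Type*} [Field K] {n m : ℕ} (v : Fin m → ℙ K (Fin n → K))

theorem rankMatrix_def (I : Finset (Fin m)) :
    rankMatrix v I = Module.finrank K (spanV v I) := rfl

theorem spanV_eq (I : Finset (Fin m)) :
    spanV v I = span K ((fun i => (v i).rep) '' (I : Set (Fin m))) := by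
  rw [spanV]
  simp_rw [Projectivization.submodule_eq]
  rw [← Submodule.span_iUnion₂]
  congr 1
  ext x
  simp [Set.mem_iUnion, eq_comm, Submodule.mem_span_singleton]

theorem spanV_mono {I J : Finset (Fin m)} (h : I ⊆ J) : spanV v I ≤ spanV v J := by
  apply iSup₂_le
  intro i hi
  exact le_iSup₂ (f := fun i _ => (v i).submodule) i (h hi)

theorem le_spanV {i : Fin m} {I : Finset (Fin m)} (h : i ∈ I) : (v i).submodule ≤ spanV v I :=
  le_iSup₂ (f := fun i _ => (v i).submodule) i h

theorem spanV_le {I : Finset (Fin m)} {P : Submodule K (Fin n → K)}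
    (h : ∀ i ∈ I, (v i).submodule ≤ P) : spanV v I ≤ P :=
  iSup₂_le h

theorem spanV_union (A B : Finset (Fin m)) : spanV v (A ∪ B) = spanV v A ⊔ spanV v B := by
  simp only [spanV, ← Finset.sup_eq_iSup]
  exact Finset.sup_union

theorem rankM_le_card (I : Finset (Fin m)) : rankMatrix v I ≤ I.card := by
  classical
  rw [rankMatrix_def, spanV_eq, ← Finset.coe_image]
  exact le_trans (finrank_span_finset_le_card _) Finset.card_image_le

theorem rank_mono {I J : Finset (Fin m)} (h : I ⊆ J) : rankMatrix v I ≤ rankMatrix v J :=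
  Submodule.finrank_mono (spanV_mono v h)

theorem one_le_rank {i : Fin m} {I : Finset (Fin m)} (h : i ∈ I) : 1 ≤ rankMatrix v I := by
  have := Submodule.finrank_mono (M := Fin n → K) (le_spanV v h)
  rwa [Projectivization.finrank_submodule] at this

theorem spanV_triple (x y z : Fin m) :
    spanV v {x, y, z} = span K {(v x).rep, (v y).rep, (v z).rep} := by
  rw [spanV_eq]
  congr 1
  simp [Set.image_insert_eq]

theorem rank_triple_of_li {x y z : Fin m}
    (h : LinearIndependent K ![(v x).rep, (v y).rep, (v z).rep]) :
    rankMatrix v {x, y, z} = 3 := by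
  rw [rankMatrix_def, spanV_triple]
  have : ({(v x).rep, (v y).rep, (v z).rep} : Set (Fin n → K))
      = Set.range ![(v x).rep, (v y).rep, (v z).rep] := by
    simp only [Matrix.range_cons, Matrix.range_empty, Set.union_empty, Set.singleton_union]
  rw [this, finrank_span_eq_card h]
  simp

theorem not_li_of_rank_ne {x y z : Fin m}
    (h : rankMatrix v {x, y, z} ≠ 3) :
    ¬ LinearIndependent K ![(v x).rep, (v y).rep, (v z).rep] :=
  fun hli => h (rank_triple_of_li v hli)

theorem decomp_exists {A B : Finset (Fin m)}
    (hA : A ≠ ∅) (hB : B ≠ ∅) (hd : Disjoint A B) (hu : A ∪ B = Finset.univ)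
    {L P : Submodule K (Fin n → K)}
    (hAL : ∀ i ∈ A, (v i).submodule ≤ L) (hBP : ∀ i ∈ B, (v i).submodule ≤ P)
    (hLP : L ⊓ P = ⊥) :
    ∃ A B : Finset (Fin m), A ≠ ∅ ∧ B ≠ ∅ ∧ Disjoint A B ∧ A ∪ B = Finset.univ ∧
      spanV v A ⊓ spanV v B = ⊥ :=
  ⟨A, B, hA, hB, hd, hu,
    le_bot_iff.1 (le_trans (inf_le_inf (spanV_le v hAL) (spanV_le v hBP)) (le_of_eq hLP))⟩

end SpanVLemmas

section Five

variable {K : Type*} [Field K] (v : Fin 5 → ℙ K (Fin 4 → K))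

theorem mem_plane {p q r s : Fin 5}
    (hpq : p ≠ q) (hpr : p ≠ r) (hps : p ≠ s) (hqr : q ≠ r) (hqs : q ≠ s) (hrs : r ≠ s)
    (hli : LinearIndependent K ![(v p).rep, (v q).rep, (v r).rep])
    (h : ∃ I, I ⊆ ({p, q, r, s} : Finset (Fin 5)) ∧ I.card = 3 ∧ rankMatrix v I ≠ 3) :
    (v s).rep ∈ span K {(v p).rep, (v q).rep} ∨
    (v s).rep ∈ span K {(v p).rep, (v r).rep} ∨
    (v s).rep ∈ span K {(v q).rep, (v r).rep} := by
  obtain ⟨I, hI, hc, hrank⟩ := h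
  rcases quad_cases hpq hpr hps hqr hqs hrs hI hc with rfl | rfl | rfl | rfl
  · right; right
    refine mem_span_pair_of_not_li ?_ (not_li_of_rank_ne v hrank)
    simpa using li_pair_of_li3 hli 1 2 (by decide)
  · right; left
    refine mem_span_pair_of_not_li ?_ (not_li_of_rank_ne v hrank)
    simpa using li_pair_of_li3 hli 0 2 (by decide)
  · left
    refine mem_span_pair_of_not_li ?_ (not_li_of_rank_ne v hrank)
    simpa using li_pair_of_li3 hli 0 1 (by decide)
  · exact absurd (rank_triple_of_li v hli) hrank

theorem exists_li_triple (hv : rankMatrix v Finset.univ = 3) :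
    ∃ p q r : Fin 5, p ≠ q ∧ p ≠ r ∧ q ≠ r ∧
      LinearIndependent K ![(v p).rep, (v q).rep, (v r).rep] := by
  classical
  set w : Fin 5 → (Fin 4 → K) := fun i => (v i).rep with hw
  have hspan : spanV v Finset.univ = span K (Set.range w) := by
    rw [spanV_eq]
    congr 1
    simp [hw]
  obtain ⟨b, hb_sub, hb_span, hb_li⟩ := exists_linearIndependent K (Set.range w)
  have hbfin : b.Finite := (Set.finite_range w).subset hb_sub
  haveI := hbfin.fintype
  have hcard : b.toFinset.card = 3 := by
    rw [← finrank_span_set_eq_card hb_li, hb_span, ← hspan]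
    exact hv
  obtain ⟨x, y, z, hxy, hxz, hyz, hxyz⟩ := Finset.card_eq_three.1 hcard
  have hx : x ∈ b := Set.mem_toFinset.1 (by rw [hxyz]; simp)
  have hy : y ∈ b := Set.mem_toFinset.1 (by rw [hxyz]; simp)
  have hz : z ∈ b := Set.mem_toFinset.1 (by rw [hxyz]; simp)
  obtain ⟨p, hp⟩ := hb_sub hx
  obtain ⟨q, hq⟩ := hb_sub hy
  obtain ⟨r, hr⟩ := hb_sub hz
  have g : Fin 3 → b := ![⟨x, hx⟩, ⟨y, hy⟩, ⟨z, hz⟩]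
  have hli : LinearIndependent K ![x, y, z] := by
    have hginj : Function.Injective (![⟨x, hx⟩, ⟨y, hy⟩, ⟨z, hz⟩] : Fin 3 → b) := by
      intro i j hij
      fin_cases i <;> fin_cases j <;> simp_all [Subtype.ext_iff]
    have h2 := hb_li.comp _ hginj
    have : ((↑) : b → Fin 4 → K) ∘ (![⟨x, hx⟩, ⟨y, hy⟩, ⟨z, hz⟩] : Fin 3 → b)
        = ![x, y, z] := by
      funext k; fin_cases k <;> rfl
    rwa [this] at h2
  refine ⟨p, q, r, ?_, ?_, ?_, ?_⟩
  · rintro rfl; rw [hq] at hp; exact hxy hp.symm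
  · rintro rfl; rw [hr] at hp; exact hxz hp.symm
  · rintro rfl; rw [hr] at hq; exact hyz hq.symm
  · rw [show (v p).rep = w p from rfl, show (v q).rep = w q from rfl,
      show (v r).rep = w r from rfl, hp, hq, hr]
    exact hli

theorem pigeon {a b c d : Fin 5}
    (hI : ∀ I ⊆ ({a, b, c, d} : Finset (Fin 5)), I.card = 3 → rankMatrix v I = 3)
    {A B : Finset (Fin 5)} (hd : Disjoint A B)
    (hSA : (({a, b, c, d} : Finset (Fin 5)) ∩ A).card = 2)
    (hSB : (({a, b, c, d} : Finset (Fin 5)) ∩ B).card = 2)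
    (hrA : rankMatrix v A ≤ 1) : False := by
  obtain ⟨i, j, hij, hijE⟩ := Finset.card_eq_two.1 hSA
  obtain ⟨k, hk⟩ := Finset.card_pos.1 (by rw [hSB]; norm_num)
  have hiA : i ∈ ({a, b, c, d} : Finset (Fin 5)) ∩ A := by rw [hijE]; simp
  have hjA : j ∈ ({a, b, c, d} : Finset (Fin 5)) ∩ A := by rw [hijE]; simp
  rw [Finset.mem_inter] at hiA hjA hk
  have hik : i ≠ k := by rintro rfl; exact Finset.disjoint_left.1 hd hiA.2 hk.2
  have hjk : j ≠ k := by rintro rfl; exact Finset.disjoint_left.1 hd hjA.2 hk.2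
  have hsub : ({i, j, k} : Finset (Fin 5)) ⊆ {a, b, c, d} := by
    intro x hx
    simp only [Finset.mem_insert, Finset.mem_singleton] at hx
    rcases hx with rfl | rfl | rfl
    exacts [hiA.1, hjA.1, hk.1]
  have hcard3 : ({i, j, k} : Finset (Fin 5)).card = 3 := by
    rw [Finset.card_insert_of_notMem (by simp [hij, hik]),
      Finset.card_insert_of_notMem (by simp [hjk]), Finset.card_singleton]
  have h3 := hI {i, j, k} hsub hcard3
  have hunion : ({i, j, k} : Finset (Fin 5)) = {i, j} ∪ {k} := by
    ext x; simp [or_assoc]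
  have hsup := Submodule.finrank_sup_add_finrank_inf_eq (spanV v {i, j}) (spanV v {k})
  have h1 : rankMatrix v {i, j} ≤ 1 := le_trans (rank_mono v (by
    intro x hx
    simp only [Finset.mem_insert, Finset.mem_singleton] at hx
    rcases hx with rfl | rfl
    exacts [hiA.2, hjA.2])) hrA
  have h2 : rankMatrix v ({k} : Finset (Fin 5)) ≤ 1 := le_trans (rankM_le_card v _) (by simp)
  rw [rankMatrix_def, hunion, spanV_union] at h3
  rw [rankMatrix_def] at h1 h2
  omega

end Five
section Core

variable {K : Type*} [Field K] (v : Fin 5 → ℙ K (Fin 4 → K))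

theorem core_same {p q r s t : Fin 5}
    (hpq : p ≠ q) (hpr : p ≠ r) (hps : p ≠ s) (hpt : p ≠ t) (hqr : q ≠ r) (hqs : q ≠ s)
    (hqt : q ≠ t) (hrs : r ≠ s) (hrt : r ≠ t) (hst : s ≠ t)
    (hcover : ∀ i, i = p ∨ i = q ∨ i = r ∨ i = s ∨ i = t)
    (hli : LinearIndependent K ![(v p).rep, (v q).rep, (v r).rep])
    (hs : (v s).rep ∈ span K {(v p).rep, (v q).rep})
    (ht : (v t).rep ∈ span K {(v p).rep, (v q).rep}) :
    ∃ A B : Finset (Fin 5), A ≠ ∅ ∧ B ≠ ∅ ∧ Disjoint A B ∧ A ∪ B = Finset.univ ∧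
      spanV v A ⊓ spanV v B = ⊥ := by
  refine decomp_exists v (A := {r}) (B := {p, q, s, t}) (L := K ∙ (v r).rep)
    (P := span K {(v p).rep, (v q).rep}) (by simp) (by simp) ?_ ?_ ?_ ?_ ?_
  · refine Finset.disjoint_left.2 fun i hi hj => ?_
    simp only [Finset.mem_insert, Finset.mem_singleton] at hi hj
    subst hi
    rcases hj with h | h | h | h
    exacts [hpr h.symm, hqr h.symm, hrs h, hrt h]
  · ext i
    simp only [Finset.mem_union, Finset.mem_insert, Finset.mem_singleton, Finset.mem_univ,
      iff_true]
    have := hcover i; tauto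
  · intro i hi
    simp only [Finset.mem_singleton] at hi
    subst hi
    rw [Projectivization.submodule_eq]
  · intro i hi
    simp only [Finset.mem_insert, Finset.mem_singleton] at hi
    rcases hi with rfl | rfl | rfl | rfl <;>
      rw [Projectivization.submodule_eq, Submodule.span_singleton_le_iff_mem]
    · exact subset_span (by simp)
    · exact subset_span (by simp)
    · exact hs
    · exact ht
  · have hperm : LinearIndependent K ![(v r).rep, (v p).rep, (v q).rep] := by
      simpa using li3_perm hli ![2, 0, 1] (by decide)
    exact span_singleton_inf_span_pair hperm

theorem core {p q r s t : Fin 5}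
    (hpq : p ≠ q) (hpr : p ≠ r) (hps : p ≠ s) (hpt : p ≠ t) (hqr : q ≠ r) (hqs : q ≠ s)
    (hqt : q ≠ t) (hrs : r ≠ s) (hrt : r ≠ t) (hst : s ≠ t)
    (hcover : ∀ i, i = p ∨ i = q ∨ i = r ∨ i = s ∨ i = t)
    (hli : LinearIndependent K ![(v p).rep, (v q).rep, (v r).rep])
    (hs : (v s).rep ∈ span K {(v p).rep, (v q).rep})
    (ht : (v t).rep ∈ span K {(v q).rep, (v r).rep})
    (hquad : ∃ I, I ⊆ ({p, r, s, t} : Finset (Fin 5)) ∧ I.card = 3 ∧ rankMatrix v I ≠ 3) :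
    ∃ A B : Finset (Fin 5), A ≠ ∅ ∧ B ≠ ∅ ∧ Disjoint A B ∧ A ∪ B = Finset.univ ∧
      spanV v A ⊓ spanV v B = ⊥ := by
  obtain ⟨a, b, hab⟩ := Submodule.mem_span_pair.1 hs
  obtain ⟨c, d, hcd⟩ := Submodule.mem_span_pair.1 ht
  obtain ⟨I, hI, hc3, hrank⟩ := hquad
  have hliK := Fintype.linearIndependent_iff.1 hli
  have habcd : a = 0 ∨ b = 0 ∨ c = 0 ∨ d = 0 := by
    rcases quad_cases hpr hps hpt hrs hrt hst hI hc3 with rfl | rfl | rfl | rfl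
    · -- I = {r, s, t} : ¬ LI ![wr, ws, wt]  ⇒  a = 0 ∨ c = 0
      have hnl := not_li_of_rank_ne v hrank
      have hac : a = 0 ∨ c = 0 := by
        by_contra hcon
        push_neg at hcon
        obtain ⟨ha, hc⟩ := hcon
        apply hnl
        rw [Fintype.linearIndependent_iff]
        intro g hg
        rw [Fin.sum_univ_three] at hg
        simp only [Matrix.cons_val_zero, Matrix.cons_val_one, Matrix.head_cons,
          Matrix.cons_val_two, Matrix.tail_cons] at hg
        rw [← hab, ← hcd] at hg
        have hkey := hliK ![g 1 * a, g 1 * b + g 2 * c, g 0 + g 2 * d] (by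
          rw [Fin.sum_univ_three]
          simp only [Matrix.cons_val_zero, Matrix.cons_val_one, Matrix.head_cons,
            Matrix.cons_val_two, Matrix.tail_cons]
          linear_combination (norm := module) hg)
        have h1 : g 1 * a = 0 := by simpa using hkey 0
        have hg1 : g 1 = 0 := by
          rcases mul_eq_zero.1 h1 with h | h; exact h; exact absurd h ha
        have h2 : g 1 * b + g 2 * c = 0 := by simpa using hkey 1
        have hg2 : g 2 = 0 := by
          rw [hg1, zero_mul, zero_add] at h2
          rcases mul_eq_zero.1 h2 with h | h; exact h; exact absurd h hc
        have h3 : g 0 + g 2 * d = 0 := by simpa using hkey 2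
        have hg0 : g 0 = 0 := by rw [hg2, zero_mul, add_zero] at h3; exact h3
        intro i; fin_cases i <;> assumption
      tauto
    · -- I = {p, s, t} : ¬ LI ![wp, ws, wt]  ⇒  b = 0 ∨ d = 0
      have hnl := not_li_of_rank_ne v hrank
      have hbd : b = 0 ∨ d = 0 := by
        by_contra hcon
        push_neg at hcon
        obtain ⟨hb, hd⟩ := hcon
        apply hnl
        rw [Fintype.linearIndependent_iff]
        intro g hg
        rw [Fin.sum_univ_three] at hg
        simp only [Matrix.cons_val_zero, Matrix.cons_val_one, Matrix.head_cons,
          Matrix.cons_val_two, Matrix.tail_cons] at hg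
        rw [← hab, ← hcd] at hg
        have hkey := hliK ![g 0 + g 1 * a, g 1 * b + g 2 * c, g 2 * d] (by
          rw [Fin.sum_univ_three]
          simp only [Matrix.cons_val_zero, Matrix.cons_val_one, Matrix.head_cons,
            Matrix.cons_val_two, Matrix.tail_cons]
          linear_combination (norm := module) hg)
        have h3 : g 2 * d = 0 := by simpa using hkey 2
        have hg2 : g 2 = 0 := by
          rcases mul_eq_zero.1 h3 with h | h; exact h; exact absurd h hd
        have h2 : g 1 * b + g 2 * c = 0 := by simpa using hkey 1
        have hg1 : g 1 = 0 := by
          rw [hg2, zero_mul, add_zero] at h2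
          rcases mul_eq_zero.1 h2 with h | h; exact h; exact absurd h hb
        have h1 : g 0 + g 1 * a = 0 := by simpa using hkey 0
        have hg0 : g 0 = 0 := by rw [hg1, zero_mul, add_zero] at h1; exact h1
        intro i; fin_cases i <;> assumption
      tauto
    · -- I = {p, r, t} : ¬ LI ![wp, wr, wt]  ⇒  c = 0
      have hnl := not_li_of_rank_ne v hrank
      have hc : c = 0 := by
        by_contra hc
        apply hnl
        rw [Fintype.linearIndependent_iff]
        intro g hg
        rw [Fin.sum_univ_three] at hg
        simp only [Matrix.cons_val_zero, Matrix.cons_val_one, Matrix.head_cons,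
          Matrix.cons_val_two, Matrix.tail_cons] at hg
        rw [← hcd] at hg
        have hkey := hliK ![g 0, g 2 * c, g 1 + g 2 * d] (by
          rw [Fin.sum_univ_three]
          simp only [Matrix.cons_val_zero, Matrix.cons_val_one, Matrix.head_cons,
            Matrix.cons_val_two, Matrix.tail_cons]
          linear_combination (norm := module) hg)
        have h2 : g 2 * c = 0 := by simpa using hkey 1
        have hg2 : g 2 = 0 := by
          rcases mul_eq_zero.1 h2 with h | h; exact h; exact absurd h hc
        have h3 : g 1 + g 2 * d = 0 := by simpa using hkey 2
        have hg1 : g 1 = 0 := by rw [hg2, zero_mul, add_zero] at h3; exact h3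
        have hg0 : g 0 = 0 := by simpa using hkey 0
        intro i; fin_cases i <;> assumption
      tauto
    · -- I = {p, r, s} : ¬ LI ![wp, wr, ws]  ⇒  b = 0
      have hnl := not_li_of_rank_ne v hrank
      have hb : b = 0 := by
        by_contra hb
        apply hnl
        rw [Fintype.linearIndependent_iff]
        intro g hg
        rw [Fin.sum_univ_three] at hg
        simp only [Matrix.cons_val_zero, Matrix.cons_val_one, Matrix.head_cons,
          Matrix.cons_val_two, Matrix.tail_cons] at hg
        rw [← hab] at hg
        have hkey := hliK ![g 0 + g 2 * a, g 2 * b, g 1] (by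
          rw [Fin.sum_univ_three]
          simp only [Matrix.cons_val_zero, Matrix.cons_val_one, Matrix.head_cons,
            Matrix.cons_val_two, Matrix.tail_cons]
          linear_combination (norm := module) hg)
        have h2 : g 2 * b = 0 := by simpa using hkey 1
        have hg2 : g 2 = 0 := by
          rcases mul_eq_zero.1 h2 with h | h; exact h; exact absurd h hb
        have h1 : g 0 + g 2 * a = 0 := by simpa using hkey 0
        have hg0 : g 0 = 0 := by rw [hg2, zero_mul, add_zero] at h1; exact h1
        have hg1 : g 1 = 0 := by simpa using hkey 2
        intro i; fin_cases i <;> assumption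
      tauto
  have hperm231 : LinearIndependent K ![(v r).rep, (v p).rep, (v q).rep] := by
    simpa using li3_perm hli ![2, 0, 1] (by decide)
  rcases habcd with ha | hb | hc | hd
  · -- a = 0 : ws = b • wq ∈ span {wq, wr} ; A = {p}
    refine decomp_exists v (A := {p}) (B := {q, r, s, t}) (L := K ∙ (v p).rep)
      (P := span K {(v q).rep, (v r).rep}) (by simp) (by simp) ?_ ?_ ?_ ?_ ?_
    · refine Finset.disjoint_left.2 fun i hi hj => ?_
      simp only [Finset.mem_insert, Finset.mem_singleton] at hi hj
      subst hi
      rcases hj with h | h | h | h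
      exacts [hpq h, hpr h, hps h, hpt h]
    · ext i
      simp only [Finset.mem_union, Finset.mem_insert, Finset.mem_singleton, Finset.mem_univ,
        iff_true]
      have := hcover i; tauto
    · intro i hi
      simp only [Finset.mem_singleton] at hi
      subst hi
      rw [Projectivization.submodule_eq]
    · intro i hi
      simp only [Finset.mem_insert, Finset.mem_singleton] at hi
      rcases hi with rfl | rfl | rfl | rfl <;>
        rw [Projectivization.submodule_eq, Submodule.span_singleton_le_iff_mem]
      · exact subset_span (by simp)
      · exact subset_span (by simp)
      · rw [← hab, ha, zero_smul, zero_add]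
        exact smul_mem _ _ (subset_span (by simp))
      · rw [← hcd]
        exact add_mem (smul_mem _ _ (subset_span (by simp)))
          (smul_mem _ _ (subset_span (by simp)))
    · exact span_singleton_inf_span_pair hli
  · -- b = 0 : ws = a • wp ; A = {p, s}
    refine decomp_exists v (A := {p, s}) (B := {q, r, t}) (L := K ∙ (v p).rep)
      (P := span K {(v q).rep, (v r).rep}) (by simp) (by simp) ?_ ?_ ?_ ?_ ?_
    · refine Finset.disjoint_left.2 fun i hi hj => ?_
      simp only [Finset.mem_insert, Finset.mem_singleton] at hi hj
      rcases hi with rfl | rfl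
      · rcases hj with h | h | h; exacts [hpq h, hpr h, hpt h]
      · rcases hj with h | h | h; exacts [hqs h.symm, hrs h.symm, hst h]
    · ext i
      simp only [Finset.mem_union, Finset.mem_insert, Finset.mem_singleton, Finset.mem_univ,
        iff_true]
      have := hcover i; tauto
    · intro i hi
      simp only [Finset.mem_insert, Finset.mem_singleton] at hi
      rcases hi with rfl | rfl <;> rw [Projectivization.submodule_eq]
      · rw [Submodule.span_singleton_le_iff_mem]
        rw [← hab, hb, zero_smul, add_zero]
        exact smul_mem _ _ (Submodule.mem_span_singleton_self _)
    · intro i hi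
      simp only [Finset.mem_insert, Finset.mem_singleton] at hi
      rcases hi with rfl | rfl | rfl <;>
        rw [Projectivization.submodule_eq, Submodule.span_singleton_le_iff_mem]
      · exact subset_span (by simp)
      · exact subset_span (by simp)
      · rw [← hcd]
        exact add_mem (smul_mem _ _ (subset_span (by simp)))
          (smul_mem _ _ (subset_span (by simp)))
    · exact span_singleton_inf_span_pair hli
  · -- c = 0 : wt = d • wr ; A = {r, t}
    refine decomp_exists v (A := {r, t}) (B := {p, q, s}) (L := K ∙ (v r).rep)
      (P := span K {(v p).rep, (v q).rep}) (by simp) (by simp) ?_ ?_ ?_ ?_ ?_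
    · refine Finset.disjoint_left.2 fun i hi hj => ?_
      simp only [Finset.mem_insert, Finset.mem_singleton] at hi hj
      rcases hi with rfl | rfl
      · rcases hj with h | h | h; exacts [hpr h.symm, hqr h.symm, hrs h]
      · rcases hj with h | h | h; exacts [hpt h.symm, hqt h.symm, hst h.symm]
    · ext i
      simp only [Finset.mem_union, Finset.mem_insert, Finset.mem_singleton, Finset.mem_univ,
        iff_true]
      have := hcover i; tauto
    · intro i hi
      simp only [Finset.mem_insert, Finset.mem_singleton] at hi
      rcases hi with rfl | rfl <;> rw [Projectivization.submodule_eq]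
      · rw [Submodule.span_singleton_le_iff_mem]
        rw [← hcd, hc, zero_smul, zero_add]
        exact smul_mem _ _ (Submodule.mem_span_singleton_self _)
    · intro i hi
      simp only [Finset.mem_insert, Finset.mem_singleton] at hi
      rcases hi with rfl | rfl | rfl <;>
        rw [Projectivization.submodule_eq, Submodule.span_singleton_le_iff_mem]
      · exact subset_span (by simp)
      · exact subset_span (by simp)
      · rw [← hab]
        exact add_mem (smul_mem _ _ (subset_span (by simp)))
          (smul_mem _ _ (subset_span (by simp)))
    · exact span_singleton_inf_span_pair hperm231
  · -- d = 0 : wt = c • wq ; A = {r}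
    refine decomp_exists v (A := {r}) (B := {p, q, s, t}) (L := K ∙ (v r).rep)
      (P := span K {(v p).rep, (v q).rep}) (by simp) (by simp) ?_ ?_ ?_ ?_ ?_
    · refine Finset.disjoint_left.2 fun i hi hj => ?_
      simp only [Finset.mem_insert, Finset.mem_singleton] at hi hj
      subst hi
      rcases hj with h | h | h | h
      exacts [hpr h.symm, hqr h.symm, hrs h, hrt h]
    · ext i
      simp only [Finset.mem_union, Finset.mem_insert, Finset.mem_singleton, Finset.mem_univ,
        iff_true]
      have := hcover i; tauto
    · intro i hi
      simp only [Finset.mem_singleton] at hi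
      subst hi
      rw [Projectivization.submodule_eq]
    · intro i hi
      simp only [Finset.mem_insert, Finset.mem_singleton] at hi
      rcases hi with rfl | rfl | rfl | rfl <;>
        rw [Projectivization.submodule_eq, Submodule.span_singleton_le_iff_mem]
      · exact subset_span (by simp)
      · exact subset_span (by simp)
      · rw [← hab]
        exact add_mem (smul_mem _ _ (subset_span (by simp)))
          (smul_mem _ _ (subset_span (by simp)))
      · rw [← hcd, hd, zero_smul, add_zero]
        exact smul_mem _ _ (subset_span (by simp))
    · exact span_singleton_inf_span_pair hperm231

end Core

set_option maxHeartbeats 2000000 in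
/-- a quintuple of rank 3 in `ℙ(K^4)` is essentially indecomposable iff
some four of the points are in general position. -/
theorem essIndec_iff_four_general (K : Type*) [Field K] [IsAlgClosed K] [CharZero K]
    (v : Fin 5 → ℙ K (Fin 4 → K))
    (hv : rankMatrix v Finset.univ = 3) :
    EssIndec v ↔ ∃ a b c d : Fin 5,
      a ≠ b ∧ a ≠ c ∧ a ≠ d ∧ b ≠ c ∧ b ≠ d ∧ c ≠ d ∧
      ∀ I : Finset (Fin 5), I ⊆ {a, b, c, d} → I.card = 3 → rankMatrix v I = 3 := by
  constructor
  · intro hEss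
    by_contra hno
    push_neg at hno
    apply hEss
    obtain ⟨p, q, r, hpq, hpr, hqr, hli⟩ := exists_li_triple v hv
    have hcard3 : ({p, q, r} : Finset (Fin 5)).card = 3 := by
      rw [Finset.card_insert_of_notMem (by simp [hpq, hpr]),
        Finset.card_insert_of_notMem (by simp [hqr]), Finset.card_singleton]
    have hsd : ((Finset.univ : Finset (Fin 5)) \ {p, q, r}).card = 2 := by
      rw [Finset.card_sdiff_of_subset (Finset.subset_univ _), hcard3]
      simp
    obtain ⟨s, t, hst, hstE⟩ := Finset.card_eq_two.1 hsd
    have hs_mem : s ∈ (Finset.univ : Finset (Fin 5)) \ {p, q, r} := by rw [hstE]; simp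
    have ht_mem : t ∈ (Finset.univ : Finset (Fin 5)) \ {p, q, r} := by rw [hstE]; simp
    rw [Finset.mem_sdiff] at hs_mem ht_mem
    have hs_notin := hs_mem.2
    have ht_notin := ht_mem.2
    simp only [Finset.mem_insert, Finset.mem_singleton, not_or] at hs_notin ht_notin
    obtain ⟨hsp, hsq, hsr⟩ := hs_notin
    obtain ⟨htp, htq, htr⟩ := ht_notin
    have hps : p ≠ s := fun h => hsp h.symm
    have hqs : q ≠ s := fun h => hsq h.symm
    have hrs : r ≠ s := fun h => hsr h.symm
    have hpt : p ≠ t := fun h => htp h.symm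
    have hqt : q ≠ t := fun h => htq h.symm
    have hrt : r ≠ t := fun h => htr h.symm
    have hcover : ∀ i : Fin 5, i = p ∨ i = q ∨ i = r ∨ i = s ∨ i = t := by
      intro i
      by_cases hi : i ∈ ({p, q, r} : Finset (Fin 5))
      · simp only [Finset.mem_insert, Finset.mem_singleton] at hi; tauto
      · have : i ∈ (Finset.univ : Finset (Fin 5)) \ {p, q, r} :=
          Finset.mem_sdiff.2 ⟨Finset.mem_univ _, hi⟩
        rw [hstE] at this
        simp only [Finset.mem_insert, Finset.mem_singleton] at this
        tauto
    -- planes for s and t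
    have hs_plane := mem_plane v hpq hpr hps hqr hqs hrs hli (hno p q r s hpq hpr hps hqr hqs hrs)
    have ht_plane := mem_plane v hpq hpr hpt hqr hqt hrt hli (hno p q r t hpq hpr hpt hqr hqt hrt)
    have hli_qpr : LinearIndependent K ![(v q).rep, (v p).rep, (v r).rep] := by
      simpa using li3_perm hli ![1, 0, 2] (by decide)
    have hli_prq : LinearIndependent K ![(v p).rep, (v r).rep, (v q).rep] := by
      simpa using li3_perm hli ![0, 2, 1] (by decide)
    have hli_qrp : LinearIndependent K ![(v q).rep, (v r).rep, (v p).rep] := by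
      simpa using li3_perm hli ![1, 2, 0] (by decide)
    have hli_rpq : LinearIndependent K ![(v r).rep, (v p).rep, (v q).rep] := by
      simpa using li3_perm hli ![2, 0, 1] (by decide)
    have hli_rqp : LinearIndependent K ![(v r).rep, (v q).rep, (v p).rep] := by
      simpa using li3_perm hli ![2, 1, 0] (by decide)
    rcases hs_plane with hs1 | hs2 | hs3 <;> rcases ht_plane with ht1 | ht2 | ht3
    · -- s ∈ pq, t ∈ pq : same plane
      exact core_same v hpq hpr hps hpt hqr hqs hqt hrs hrt hst hcover hli hs1 ht1
    · -- s ∈ pq, t ∈ pr : shared p, core (q, p, r)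
      exact core v hpq.symm hqr hqs hqt hpr hps hpt hrs hrt hst
        (fun i => by have := hcover i; tauto) hli_qpr
        (by rwa [Set.pair_comm] at hs1) ht2
        (hno q r s t hqr hqs hqt hrs hrt hst)
    · -- s ∈ pq, t ∈ qr : shared q, core (p, q, r)
      exact core v hpq hpr hps hpt hqr hqs hqt hrs hrt hst hcover hli hs1 ht3
        (hno p r s t hpr hps hpt hrs hrt hst)
    · -- s ∈ pr, t ∈ pq : shared p, core (r, p, q)
      exact core v hpr.symm hqr.symm hrs hrt hpq hps hpt hqs hqt hst
        (fun i => by have := hcover i; tauto) hli_rpq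
        (by rwa [Set.pair_comm] at hs2) ht1
        (hno r q s t hqr.symm hrs hrt hqs hqt hst)
    · -- s ∈ pr, t ∈ pr : same plane, core_same (p, r, q)
      exact core_same v hpr hpq hps hpt hqr.symm hrs hrt hqs hqt hst
        (fun i => by have := hcover i; tauto) hli_prq hs2 ht2
    · -- s ∈ pr, t ∈ qr : shared r, core (p, r, q)
      exact core v hpr hpq hps hpt hqr.symm hrs hrt hqs hqt hst
        (fun i => by have := hcover i; tauto) hli_prq hs2
        (by rwa [Set.pair_comm] at ht3)
        (hno p q s t hpq hps hpt hqs hqt hst)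
    · -- s ∈ qr, t ∈ pq : shared q, core (r, q, p)
      exact core v hqr.symm hpr.symm hrs hrt hpq.symm hqs hqt hps hpt hst
        (fun i => by have := hcover i; tauto) hli_rqp
        (by rwa [Set.pair_comm] at hs3) (by rwa [Set.pair_comm] at ht1)
        (hno r p s t hpr.symm hrs hrt hps hpt hst)
    · -- s ∈ qr, t ∈ pr : shared r, core (q, r, p)
      exact core v hqr hpq.symm hqs hqt hpr.symm hrs hrt hps hpt hst
        (fun i => by have := hcover i; tauto) hli_qrp hs3
        (by rwa [Set.pair_comm] at ht2)
        (hno q p s t hpq.symm hqs hqt hps hpt hst)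
    · -- s ∈ qr, t ∈ qr : same plane, core_same (q, r, p)
      exact core_same v hqr hpq.symm hqs hqt hpr.symm hrs hrt hps hpt hst
        (fun i => by have := hcover i; tauto) hli_qrp hs3 ht3
  · rintro ⟨a, b, c, d, hab, hac, had, hbc, hbd, hcd, hI⟩
    rintro ⟨A, B, hA, hB, hd, hu, hbot⟩
    have hsup := Submodule.finrank_sup_add_finrank_inf_eq (spanV v A) (spanV v B)
    rw [hbot, finrank_bot, ← spanV_union, hu, add_zero] at hsup
    rw [rankMatrix_def] at hv
    obtain ⟨i, hi⟩ := Finset.nonempty_iff_ne_empty.2 hA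
    obtain ⟨j, hj⟩ := Finset.nonempty_iff_ne_empty.2 hB
    have hA1 := one_le_rank v hi
    have hB1 := one_le_rank v hj
    rw [rankMatrix_def] at hA1 hB1
    have hSA : (({a, b, c, d} : Finset (Fin 5)) ∩ A).card ≤ 2 := by
      by_contra hcon
      push_neg at hcon
      obtain ⟨I, hIsub, hIcard⟩ := Finset.exists_subset_card_eq hcon
      have h3 := hI I (hIsub.trans Finset.inter_subset_left) hIcard
      have hle := rank_mono v (hIsub.trans Finset.inter_subset_right)
      rw [h3, rankMatrix_def] at hle
      omega
    have hSB : (({a, b, c, d} : Finset (Fin 5)) ∩ B).card ≤ 2 := by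
      by_contra hcon
      push_neg at hcon
      obtain ⟨I, hIsub, hIcard⟩ := Finset.exists_subset_card_eq hcon
      have h3 := hI I (hIsub.trans Finset.inter_subset_left) hIcard
      have hle := rank_mono v (hIsub.trans Finset.inter_subset_right)
      rw [h3, rankMatrix_def] at hle
      omega
    have hScard : ({a, b, c, d} : Finset (Fin 5)).card = 4 := by
      rw [Finset.card_insert_of_notMem (by simp [hab, hac, had]),
        Finset.card_insert_of_notMem (by simp [hbc, hbd]),
        Finset.card_insert_of_notMem (by simp [hcd]), Finset.card_singleton]
    have hsplit : (({a, b, c, d} : Finset (Fin 5)) ∩ A).card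
        + (({a, b, c, d} : Finset (Fin 5)) ∩ B).card = 4 := by
      rw [← Finset.card_union_of_disjoint (hd.mono Finset.inter_subset_right
        Finset.inter_subset_right), ← Finset.inter_union_distrib_left, hu,
        Finset.inter_univ, hScard]
    have h2A : (({a, b, c, d} : Finset (Fin 5)) ∩ A).card = 2 := by omega
    have h2B : (({a, b, c, d} : Finset (Fin 5)) ∩ B).card = 2 := by omega
    have hor : Module.finrank K (spanV v A) ≤ 1 ∨ Module.finrank K (spanV v B) ≤ 1 := by omega
    rcases hor with h | h
    · exact pigeon v hI hd h2A h2B (by rw [rankMatrix_def]; exact h)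
    · exact pigeon v hI hd.symm h2B h2A (by rw [rankMatrix_def]; exact h)
end

section
/- Let v : Fin 5 → ℙ(K^4) satisfy π(v)({0,1,2}) = 2 and π(v)(I) = min(|I|, 3) for every I ⊆ Fin 5 with I ≠ {0,1,2}. Then there exist scalars p_0, p_1 ∈ K with p_0 p_1 (p_0 − p_1) ≠ 0 and a linear automorphism g of K^4 such that v_0 = g[e_0], v_1 = g[e_1], v_2 = g[p_0 e_0 + p_1 e_1], v_3 = g[e_2], and v_4 = g[e_0 + e_1 + e_2]. -/
open scoped LinearAlgebra.Projectivization

lemma ne_zero_of_apply_ne_zero {K : Type*} [Field K] {n : ℕ} {u : Fin n → K} {i : Fin n}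
    (h : u i ≠ 0) : u ≠ 0 := fun h0 => h (by rw [h0]; rfl)

/-!
A vector `r i` spanning `v i` lies in the span of other points exactly when adding `i` does not
raise the rank. So the ranks give `r 2 = c₀ r 0 + c₁ r 1` and `r 4 = a r 0 + b r 1 + c r 3` with
`r 0, r 1, r 3` independent, and all these coefficients are nonzero, since otherwise some point
would lie in the span of fewer points than its rank allows. Extending `a r 0, b r 1, c r 3` to a
basis gives `g`, with `p₀ = c₀ / a` and `p₁ = c₁ / b`; if `p₀ = p₁`, then `r 2` would lie on the
line through `v 3` and `v 4`.
-/

namespace Projectivization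

variable {K V : Type*} [DivisionRing K] [AddCommGroup V] [Module K V]

theorem rep_mem_submodule (p : ℙ K V) : p.rep ∈ p.submodule := by
  rw [submodule_eq]; exact Submodule.mem_span_singleton_self _

theorem eq_mk_of_mem_submodule {p : ℙ K V} {u : V} (hu : u ≠ 0) (h : u ∈ p.submodule) :
    p = mk K u hu := by
  rw [submodule_eq, Submodule.mem_span_singleton] at h
  obtain ⟨a, rfl⟩ := h
  exact ((mk_eq_mk_iff' K _ _ hu p.rep_nonzero).mpr ⟨a, rfl⟩ ▸ p.mk_rep).symm

end Projectivization

theorem exists_linearEquiv_apply_eq_sum {K V : Type*} [Field K] [AddCommGroup V] [Module K V]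
    [FiniteDimensional K V] {n : ℕ} (hV : Module.finrank K V = n + 1) {w : Fin n → V}
    (hw : LinearIndependent K w) :
    ∃ g : (Fin (n + 1) → K) ≃ₗ[K] V,
      ∀ x : Fin (n + 1) → K, x (Fin.last n) = 0 → g x = ∑ i, x i.castSucc • w i := by
  obtain ⟨u, hu⟩ : ∃ u, u ∉ Submodule.span K (Set.range w) := by
    by_contra! hall
    have := finrank_range_le_card (R := K) w
    rw [Set.finrank, (Submodule.eq_top_iff'.2 hall), finrank_top, hV, Fintype.card_fin] at this
    omega
  let b := basisOfLinearIndependentOfCardEqFinrank (linearIndependent_finSnoc.2 ⟨hw, hu⟩)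
    (by rw [Fintype.card_fin, hV])
  refine ⟨b.equivFun.symm, fun x hx => ?_⟩
  simp [b, Fin.sum_univ_castSucc, hx]

section RankMatrix

variable {K : Type*} [Field K] {n m : ℕ} {v : Fin m → ℙ K (Fin n → K)}

theorem spanV_eq_span_image (v : Fin m → ℙ K (Fin n → K)) (I : Finset (Fin m)) :
    spanV v I = Submodule.span K ((fun i => (v i).rep) '' I) := by
  simp only [spanV, Projectivization.submodule_eq, Set.image_eq_iUnion, Submodule.span_iUnion₂]
  simp

theorem spanV_insert (i : Fin m) (I : Finset (Fin m)) :
    spanV v (insert i I) = (v i).submodule ⊔ spanV v I :=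
  Finset.iSup_insert i I _

theorem rep_mem_spanV {i : Fin m} {I : Finset (Fin m)} (hi : i ∈ I) : (v i).rep ∈ spanV v I :=
  le_iSup₂ (f := fun i (_ : i ∈ I) => (v i).submodule) i hi (v i).rep_mem_submodule

theorem smul_add_smul_mem_spanV {i j : Fin m} {I : Finset (Fin m)} (hi : i ∈ I) (hj : j ∈ I)
    (x y : K) : x • (v i).rep + y • (v j).rep ∈ spanV v I :=
  add_mem (Submodule.smul_mem _ _ (rep_mem_spanV hi)) (Submodule.smul_mem _ _ (rep_mem_spanV hj))

theorem rep_mem_spanV_iff_rankMatrix_insert {i : Fin m} {I : Finset (Fin m)} :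
    (v i).rep ∈ spanV v I ↔ rankMatrix v (insert i I) = rankMatrix v I := by
  rw [rankMatrix, rankMatrix, spanV_insert]
  constructor
  · intro h
    rw [sup_eq_right.mpr]
    rwa [Projectivization.submodule_eq, Submodule.span_singleton_le_iff_mem]
  · intro h
    rw [Submodule.eq_of_le_of_finrank_eq le_sup_right h.symm]
    exact Submodule.mem_sup_left (v i).rep_mem_submodule

theorem linearIndependent_rep_comp_iff {k : ℕ} (f : Fin k → Fin m) :
    LinearIndependent K (fun j => (v (f j)).rep) ↔ rankMatrix v (Finset.univ.image f) = k := by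
  rw [linearIndependent_iff_card_eq_finrank_span, Set.finrank, rankMatrix, spanV_eq_span_image,
    Fintype.card_fin, Finset.coe_image, Finset.coe_univ, Set.image_univ, ← Set.range_comp]
  exact eq_comm

end RankMatrix

section RankType

variable {K : Type*} [Field K] {n : ℕ} {v : Fin 5 → ℙ K (Fin n → K)}

theorem rep_notMem_spanV (h : ∀ I : Finset (Fin 5), I ≠ {0, 1, 2} → rankMatrix v I = min I.card 3)
    {i : Fin 5} {I : Finset (Fin 5)} (hi : i ∉ I) (hI : I.card < 3) (hiI : insert i I ≠ {0, 1, 2}) :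
    (v i).rep ∉ spanV v I := by
  have hI' : I ≠ {0, 1, 2} := by rintro rfl; exact absurd hI (by decide)
  rw [rep_mem_spanV_iff_rankMatrix_insert, h _ hiI, h _ hI', Finset.card_insert_of_notMem hi]
  omega

theorem exists_smul_add_smul_eq_rep_two (h012 : rankMatrix v {0, 1, 2} = 2)
    (h : ∀ I : Finset (Fin 5), I ≠ {0, 1, 2} → rankMatrix v I = min I.card 3) :
    ∃ c₀ c₁ : K, c₀ ≠ 0 ∧ c₁ ≠ 0 ∧ c₀ • (v 0).rep + c₁ • (v 1).rep = (v 2).rep := by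
  have hmem : (v 2).rep ∈ spanV v {0, 1} := by
    rw [rep_mem_spanV_iff_rankMatrix_insert,
      show insert 2 {0, 1} = ({0, 1, 2} : Finset (Fin 5)) by decide, h012, h _ (by decide)]
    rfl
  rw [spanV_eq_span_image] at hmem
  obtain ⟨c₀, c₁, hr₂⟩ := Submodule.mem_span_pair.1 (by simpa [Set.image_insert_eq] using hmem)
  refine ⟨c₀, c₁, ?_, ?_, hr₂⟩
  · rintro rfl
    refine rep_notMem_spanV h (i := 2) (I := {1}) (by decide) (by decide) (by decide) ?_
    rw [← hr₂, zero_smul, zero_add]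
    exact Submodule.smul_mem _ _ (rep_mem_spanV (by decide))
  · rintro rfl
    refine rep_notMem_spanV h (i := 2) (I := {0}) (by decide) (by decide) (by decide) ?_
    rw [← hr₂, zero_smul, add_zero]
    exact Submodule.smul_mem _ _ (rep_mem_spanV (by decide))

theorem exists_smul_add_smul_add_smul_eq_rep_four
    (h : ∀ I : Finset (Fin 5), I ≠ {0, 1, 2} → rankMatrix v I = min I.card 3) :
    ∃ a b c : K, a ≠ 0 ∧ b ≠ 0 ∧ c ≠ 0 ∧
      a • (v 0).rep + b • (v 1).rep + c • (v 3).rep = (v 4).rep := by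
  have hmem : (v 4).rep ∈ spanV v {0, 1, 3} := by
    rw [rep_mem_spanV_iff_rankMatrix_insert, h _ (by decide), h _ (by decide)]
    rfl
  rw [spanV_eq_span_image] at hmem
  obtain ⟨a, b, c, hr₄⟩ := Submodule.mem_span_triple.1 (by simpa [Set.image_insert_eq] using hmem)
  refine ⟨a, b, c, ?_, ?_, ?_, hr₄⟩
  · rintro rfl
    refine rep_notMem_spanV h (i := 4) (I := {1, 3}) (by decide) (by decide) (by decide) ?_
    rw [← hr₄, zero_smul, zero_add]
    exact smul_add_smul_mem_spanV (by decide) (by decide) _ _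
  · rintro rfl
    refine rep_notMem_spanV h (i := 4) (I := {0, 3}) (by decide) (by decide) (by decide) ?_
    rw [← hr₄, zero_smul, add_zero]
    exact smul_add_smul_mem_spanV (by decide) (by decide) _ _
  · rintro rfl
    refine rep_notMem_spanV h (i := 4) (I := {0, 1}) (by decide) (by decide) (by decide) ?_
    rw [← hr₄, zero_smul, add_zero]
    exact smul_add_smul_mem_spanV (by decide) (by decide) _ _

theorem div_ne_div_of_smul_add_smul_eq_rep_two
    (h : ∀ I : Finset (Fin 5), I ≠ {0, 1, 2} → rankMatrix v I = min I.card 3) {c₀ c₁ a b c : K}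
    (ha : a ≠ 0) (hb : b ≠ 0) (hr₂ : c₀ • (v 0).rep + c₁ • (v 1).rep = (v 2).rep)
    (hr₄ : a • (v 0).rep + b • (v 1).rep + c • (v 3).rep = (v 4).rep) : c₀ / a ≠ c₁ / b := by
  intro hp
  obtain ⟨p, rfl⟩ : ∃ p, c₀ = p * a := ⟨c₀ / a, (div_mul_cancel₀ _ ha).symm⟩
  rw [mul_div_cancel_right₀ _ ha] at hp
  obtain rfl : c₁ = p * b := by rw [hp, div_mul_cancel₀ _ hb]
  refine rep_notMem_spanV h (i := 2) (I := {3, 4}) (by decide) (by decide) (by decide) ?_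
  have : (v 2).rep = (-(p * c)) • (v 3).rep + p • (v 4).rep := by
    rw [← hr₂, ← hr₄]
    module
  rw [this]
  exact smul_add_smul_mem_spanV (by decide) (by decide) _ _

theorem exists_linearIndependent_normal_form (h012 : rankMatrix v {0, 1, 2} = 2)
    (h : ∀ I : Finset (Fin 5), I ≠ {0, 1, 2} → rankMatrix v I = min I.card 3) :
    ∃ w : Fin 3 → Fin n → K, LinearIndependent K w ∧ ∃ p₀ p₁ : K, p₀ * p₁ * (p₀ - p₁) ≠ 0 ∧
      w 0 ∈ (v 0).submodule ∧ w 1 ∈ (v 1).submodule ∧ p₀ • w 0 + p₁ • w 1 ∈ (v 2).submodule ∧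
      w 2 ∈ (v 3).submodule ∧ w 0 + w 1 + w 2 ∈ (v 4).submodule := by
  obtain ⟨c₀, c₁, hc₀, hc₁, hr₂⟩ := exists_smul_add_smul_eq_rep_two h012 h
  obtain ⟨a, b, c, ha, hb, hc, hr₄⟩ := exists_smul_add_smul_add_smul_eq_rep_four h
  have hind : LinearIndependent K fun j => (v (![0, 1, 3] j)).rep :=
    (linearIndependent_rep_comp_iff _).2 (by rw [h _ (by decide)]; rfl)
  refine ⟨_, hind.units_smul ![Units.mk0 a ha, Units.mk0 b hb, Units.mk0 c hc], c₀ / a, c₁ / b,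
    mul_ne_zero (mul_ne_zero (div_ne_zero hc₀ ha) (div_ne_zero hc₁ hb))
      (sub_ne_zero.2 (div_ne_div_of_smul_add_smul_eq_rep_two h ha hb hr₂ hr₄)), ?_, ?_, ?_, ?_, ?_⟩
  all_goals simp only [Pi.smul_apply', Matrix.cons_val_zero, Matrix.cons_val_one, Matrix.cons_val,
    Units.smul_def, Units.val_mk0]
  · exact Submodule.smul_mem _ _ (v 0).rep_mem_submodule
  · exact Submodule.smul_mem _ _ (v 1).rep_mem_submodule
  · rw [smul_smul, smul_smul, div_mul_cancel₀ _ ha, div_mul_cancel₀ _ hb, hr₂]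
    exact (v 2).rep_mem_submodule
  · exact Submodule.smul_mem _ _ (v 3).rep_mem_submodule
  · rw [hr₄]
    exact (v 4).rep_mem_submodule

end RankType

/-- normal form for quintuples of rank type (5,8). -/
theorem rank_5_8_normal_form (K : Type*) [Field K]
    (v : Fin 5 → ℙ K (Fin 4 → K))
    (h012 : rankMatrix v {0, 1, 2} = 2)
    (h : ∀ I : Finset (Fin 5), I ≠ {0, 1, 2} → rankMatrix v I = min I.card 3) :
    ∃ p₀ p₁ : K, ∃ hp : p₀ * p₁ * (p₀ - p₁) ≠ 0,
      ∃ g : (Fin 4 → K) ≃ₗ[K] (Fin 4 → K),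
        v 0 = Projectivization.mk K (g ![1,0,0,0])
            (g.map_ne_zero_iff.mpr (ne_zero_of_apply_ne_zero (i := 0) (by norm_num))) ∧
        v 1 = Projectivization.mk K (g ![0,1,0,0])
            (g.map_ne_zero_iff.mpr (ne_zero_of_apply_ne_zero (i := 1) (by norm_num))) ∧
        v 2 = Projectivization.mk K (g ![p₀,p₁,0,0])
            (g.map_ne_zero_iff.mpr (ne_zero_of_apply_ne_zero (i := 0) (by
              simpa using left_ne_zero_of_mul (left_ne_zero_of_mul hp)))) ∧
        v 3 = Projectivization.mk K (g ![0,0,1,0])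
            (g.map_ne_zero_iff.mpr (ne_zero_of_apply_ne_zero (i := 2) (by
              show (1 : K) ≠ 0; exact one_ne_zero))) ∧
        v 4 = Projectivization.mk K (g ![1,1,1,0])
            (g.map_ne_zero_iff.mpr (ne_zero_of_apply_ne_zero (i := 0) (by norm_num))) := by
  obtain ⟨w, hw, p₀, p₁, hp, h₀, h₁, h₂, h₃, h₄⟩ := exists_linearIndependent_normal_form h012 h
  obtain ⟨g, hg⟩ := exists_linearEquiv_apply_eq_sum (by simp) hw
  refine ⟨p₀, p₁, hp, g, ?_, ?_, ?_, ?_, ?_⟩ <;>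
    refine Projectivization.eq_mk_of_mem_submodule _ ?_ <;>
    rw [hg _ rfl] <;>
    simpa [Fin.sum_univ_three]
end

section
/- Let p_0, p_1 ∈ K and q_0, q_1 ∈ K satisfy p_0 p_1 (p_0 − p_1) ≠ 0 and q_0 q_1 (q_0 − q_1) ≠ 0. Then the tuples ([e_0], [e_1], [p_0 e_0 + p_1 e_1], [e_2], [e_0+e_1+e_2]) and ([e_0], [e_1], [q_0 e_0 + q_1 e_1], [e_2], [e_0+e_1+e_2]) in ℙ(K^4)^5 are in the same GL_4-orbit if and only if there exists c ∈ K, c ≠ 0, with q_0 = c · p_0 and q_1 = c · p_1. -/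
/-! An automorphism `g` fixing the points `[e₀], [e₁], [e₂], [e₀ + e₁ + e₂]` scales `e₀, e₁, e₂`
and their sum; comparing coefficients in the independent family `e₀, e₁, e₂` shows that all these
scalars agree. So `g` acts on the line `⟨e₀, e₁⟩` by a scalar and `[q] = g [p] = [p]`. Conversely,
when `q` is proportional to `p` the two tuples coincide. -/

open scoped LinearAlgebra.Projectivization

/-- Two tuples of points are in the same `GL_n`-orbit. -/
def SameOrbit {K : Type*} [Field K] {n m : ℕ}
    (v w : Fin m → ℙ K (Fin n → K)) : Prop :=
  ∃ g : (Fin n → K) ≃ₗ[K] (Fin n → K),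
    ∀ i, w i = Projectivization.map g.toLinearMap g.injective (v i)

namespace Projectivization

variable {K V : Type*} [Field K] [AddCommGroup V] [Module K V]

lemma exists_apply_eq_smul_of_mk_eq_map_mk {g : V ≃ₗ[K] V} {u v : V} {hu : u ≠ 0} {hv : v ≠ 0}
    (h : mk K v hv = map g.toLinearMap g.injective (mk K u hu)) : ∃ a : Kˣ, g u = a • v := by
  obtain ⟨a, ha⟩ := (mk_eq_mk_iff K _ _ _ _).1 h
  exact ⟨a⁻¹, eq_inv_smul_iff.2 ha⟩

lemma map_mk_of_apply_eq_smul {g : V ≃ₗ[K] V} {u : V} (hu : u ≠ 0) {a : Kˣ} (h : g u = a • u) :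
    map g.toLinearMap g.injective (mk K u hu) = mk K u hu :=
  (mk_eq_mk_iff K _ _ _ _).2 ⟨a, h.symm⟩

end Projectivization

lemma LinearIndependent.eq_of_apply_eq_smul_of_apply_add_eq_smul
    {K V : Type*} [Field K] [AddCommGroup V] [Module K V] {f : V →ₗ[K] V} {u v w : V}
    (hind : LinearIndependent K ![u, v, w]) {a b d t : K}
    (hu : f u = a • u) (hv : f v = b • v) (hw : f w = d • w)
    (hs : f (u + v + w) = t • (u + v + w)) : a = t ∧ b = t ∧ d = t := by
  have hzero : (a - t) • u + (b - t) • v + (d - t) • w = 0 := by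
    have hsum : a • u + b • v + d • w = t • (u + v + w) := by
      rw [← hu, ← hv, ← hw, ← map_add, ← map_add, hs]
    linear_combination (norm := module) hsum
  have := Fintype.linearIndependent_iff.1 hind ![a - t, b - t, d - t]
    (by simpa [Fin.sum_univ_three] using hzero)
  exact ⟨sub_eq_zero.1 (this 0), sub_eq_zero.1 (this 1), sub_eq_zero.1 (this 2)⟩

section Coordinates

variable (K : Type*) [Field K]

lemma linearIndependent_e₀_e₁_e₂ :
    LinearIndependent K ![(![1, 0, 0, 0] : Fin 4 → K), ![0, 1, 0, 0], ![0, 0, 1, 0]] := by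
  refine Fintype.linearIndependent_iff.2 fun c hc i => ?_
  fin_cases i
  · simpa [Fin.sum_univ_three] using congrFun hc 0
  · simpa [Fin.sum_univ_three] using congrFun hc 1
  · simpa [Fin.sum_univ_three] using congrFun hc 2

lemma vec_one_one_one_zero_eq :
    (![1, 1, 1, 0] : Fin 4 → K) = ![1, 0, 0, 0] + ![0, 1, 0, 0] + ![0, 0, 1, 0] := by
  funext j; fin_cases j <;> simp

lemma vec_eq_smul_add_smul (x y : K) :
    (![x, y, 0, 0] : Fin 4 → K) = x • ![1, 0, 0, 0] + y • ![0, 1, 0, 0] := by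
  funext j; fin_cases j <;> simp

lemma mk_eq_mk_iff_proportional {p₀ p₁ q₀ q₁ : K} (hp : (![p₀, p₁, 0, 0] : Fin 4 → K) ≠ 0)
    (hq : (![q₀, q₁, 0, 0] : Fin 4 → K) ≠ 0) :
    Projectivization.mk K ![q₀, q₁, 0, 0] hq = Projectivization.mk K ![p₀, p₁, 0, 0] hp ↔
      ∃ c : K, c ≠ 0 ∧ q₀ = c * p₀ ∧ q₁ = c * p₁ := by
  rw [Projectivization.mk_eq_mk_iff]
  constructor
  · rintro ⟨c, hc⟩
    exact ⟨c, c.ne_zero, by simpa [Units.smul_def] using (congrFun hc 0).symm,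
      by simpa [Units.smul_def] using (congrFun hc 1).symm⟩
  · rintro ⟨c, hc, rfl, rfl⟩
    exact ⟨Units.mk0 c hc, by funext j; fin_cases j <;> simp⟩

end Coordinates

/-- the tuples `([e₀],[e₁],[p],[e₂],[e₀+e₁+e₂])` and
`([e₀],[e₁],[q],[e₂],[e₀+e₁+e₂])` with `p, q` generic in the line `⟨e₀,e₁⟩` are in the same
`GL_4`-orbit iff `q` is a nonzero scalar multiple of `p`. -/
theorem sameOrbit_iff_proportional_5_8 (K : Type*) [Field K]
    (p₀ p₁ q₀ q₁ : K)
    (hp : p₀ * p₁ * (p₀ - p₁) ≠ 0) (hq : q₀ * q₁ * (q₀ - q₁) ≠ 0) :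
    SameOrbit
      ![Projectivization.mk K ![1,0,0,0] (ne_zero_of_apply_ne_zero (i := 0) (by norm_num)),
        Projectivization.mk K ![0,1,0,0] (ne_zero_of_apply_ne_zero (i := 1) (by norm_num)),
        Projectivization.mk K ![p₀,p₁,0,0] (ne_zero_of_apply_ne_zero (i := 0) (by
          simpa using left_ne_zero_of_mul (left_ne_zero_of_mul hp))),
        Projectivization.mk K ![0,0,1,0] (ne_zero_of_apply_ne_zero (i := 2) (by exact one_ne_zero)),
        Projectivization.mk K ![1,1,1,0] (ne_zero_of_apply_ne_zero (i := 0) (by norm_num))]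
      ![Projectivization.mk K ![1,0,0,0] (ne_zero_of_apply_ne_zero (i := 0) (by norm_num)),
        Projectivization.mk K ![0,1,0,0] (ne_zero_of_apply_ne_zero (i := 1) (by norm_num)),
        Projectivization.mk K ![q₀,q₁,0,0] (ne_zero_of_apply_ne_zero (i := 0) (by
          simpa using left_ne_zero_of_mul (left_ne_zero_of_mul hq))),
        Projectivization.mk K ![0,0,1,0] (ne_zero_of_apply_ne_zero (i := 2) (by exact one_ne_zero)),
        Projectivization.mk K ![1,1,1,0] (ne_zero_of_apply_ne_zero (i := 0) (by norm_num))]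
    ↔ ∃ c : K, c ≠ 0 ∧ q₀ = c * p₀ ∧ q₁ = c * p₁ := by
  constructor
  · rintro ⟨g, hg⟩
    obtain ⟨a, ha⟩ := Projectivization.exists_apply_eq_smul_of_mk_eq_map_mk (hg 0)
    obtain ⟨b, hb⟩ := Projectivization.exists_apply_eq_smul_of_mk_eq_map_mk (hg 1)
    obtain ⟨d, hd⟩ := Projectivization.exists_apply_eq_smul_of_mk_eq_map_mk (hg 3)
    obtain ⟨t, ht⟩ := Projectivization.exists_apply_eq_smul_of_mk_eq_map_mk (hg 4)
    rw [vec_one_one_one_zero_eq] at ht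
    obtain ⟨hat, hbt, -⟩ := (linearIndependent_e₀_e₁_e₂ K).eq_of_apply_eq_smul_of_apply_add_eq_smul
      (f := g.toLinearMap) ha hb hd ht
    have hgp : g ![p₀, p₁, 0, 0] = t • ![p₀, p₁, 0, 0] := by
      rw [vec_eq_smul_add_smul]
      simp only [map_add, map_smul, ha, hb, Units.smul_def, hat, hbt]
      module
    exact (mk_eq_mk_iff_proportional K _ _).1
      ((hg 2).trans (Projectivization.map_mk_of_apply_eq_smul _ hgp))
  · intro hc
    refine ⟨LinearEquiv.refl K _, fun i => ?_⟩
    fin_cases i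
    · rfl
    · rfl
    · exact (mk_eq_mk_iff_proportional K _ _).2 hc
    · rfl
    · rfl
end

section
/- Let p_0, p_1 ∈ K and q_0, q_1 ∈ K satisfy p_0 p_1 (p_0 − p_1) ≠ 0 and q_0 q_1 (q_0 − q_1) ≠ 0. Then the tuples ([e_2], [e_0], [e_1], [e_0+e_1], [p_0 e_0 + p_1 e_1]) and ([e_2], [e_0], [e_1], [e_0+e_1], [q_0 e_0 + q_1 e_1]) in ℙ(K^4)^5 are in the same GL_4-orbit if and only if there exists c ∈ K, c ≠ 0, with q_0 = c · p_0 and q_1 = c · p_1. -/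
open scoped LinearAlgebra.Projectivization

/-! The first four points `[e₂], [e₀], [e₁], [e₀ + e₁]` are common to both tuples, so any `g`
relating the tuples fixes `[e₀]`, `[e₁]` and `[e₀ + e₁]`. Then `g e₀ = a e₀`, `g e₁ = b e₁` and
`g (e₀ + e₁) = d (e₀ + e₁)`, whence `a = d = b` by linear independence: `g` is a scalar on
`⟨e₀, e₁⟩` and fixes `[p]`, forcing `[q] = [p]`. Conversely, if `[q] = [p]` the tuples coincide. -/

open Projectivization Submodule

section

variable {K V : Type*} [Field K] [AddCommGroup V] [Module K V] {f : V →ₗ[K] V} {x y : V}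

theorem LinearIndependent.eigenvalue_eq_of_apply_add (hxy : LinearIndependent K ![x, y])
    {a b c : K} (hx : a • x = f x) (hy : b • y = f y) (hxy' : c • (x + y) = f (x + y)) :
    a = b := by
  have hrel : (a - c) • x + (b - c) • y = 0 := by
    rw [map_add, ← hx, ← hy] at hxy'
    linear_combination (norm := module) -hxy'
  obtain ⟨hac, hbc⟩ := LinearIndependent.pair_iff.1 hxy _ _ hrel
  linear_combination hac - hbc

theorem LinearMap.smul_eq_apply_of_mem_span_pair {a : K} (hx : a • x = f x) (hy : a • y = f y)
    {p : V} (hp : p ∈ span K {x, y}) : a • p = f p := by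
  obtain ⟨s, t, rfl⟩ := mem_span_pair.1 hp
  rw [map_add, map_smul, map_smul, ← hx, ← hy, smul_add, smul_comm s, smul_comm t]

theorem Projectivization.map_mk_eq_self_iff (hf : Function.Injective f) {v : V} (hv : v ≠ 0) :
    map f hf (mk K v hv) = mk K v hv ↔ ∃ a : K, a • v = f v :=
  mk_eq_mk_iff' K _ _ _ _

theorem Projectivization.map_mk_eq_self_of_mem_span_pair (hf : Function.Injective f)
    (hxy : LinearIndependent K ![x, y]) (hx : x ≠ 0) (hy : y ≠ 0) (hs : x + y ≠ 0)
    (hfx : map f hf (mk K x hx) = mk K x hx) (hfy : map f hf (mk K y hy) = mk K y hy)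
    (hfs : map f hf (mk K (x + y) hs) = mk K (x + y) hs)
    {p : V} (hp : p ∈ span K {x, y}) (hp0 : p ≠ 0) : map f hf (mk K p hp0) = mk K p hp0 := by
  obtain ⟨a, ha⟩ := (map_mk_eq_self_iff hf hx).1 hfx
  obtain ⟨b, hb⟩ := (map_mk_eq_self_iff hf hy).1 hfy
  obtain ⟨c, hc⟩ := (map_mk_eq_self_iff hf hs).1 hfs
  obtain rfl := hxy.eigenvalue_eq_of_apply_add ha hb hc
  exact (map_mk_eq_self_iff hf hp0).2 ⟨a, f.smul_eq_apply_of_mem_span_pair ha hb hp⟩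

end

theorem sameOrbit_iff_mk_eq_of_mem_span_pair {K : Type*} [Field K] {n : ℕ}
    {u x y s p q : Fin n → K}
    (hu : u ≠ 0) (hx : x ≠ 0) (hy : y ≠ 0) (hs0 : s ≠ 0) (hp0 : p ≠ 0) (hq0 : q ≠ 0)
    (hxy : LinearIndependent K ![x, y]) (hs : s = x + y) (hp : p ∈ span K {x, y}) :
    SameOrbit ![mk K u hu, mk K x hx, mk K y hy, mk K s hs0, mk K p hp0]
      ![mk K u hu, mk K x hx, mk K y hy, mk K s hs0, mk K q hq0] ↔ mk K q hq0 = mk K p hp0 := by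
  subst hs
  constructor
  · rintro ⟨g, hg⟩
    exact (hg 4).trans (map_mk_eq_self_of_mem_span_pair g.injective hxy hx hy hs0 (hg 1).symm
      (hg 2).symm (hg 3).symm hp hp0)
  · intro hqp
    refine ⟨LinearEquiv.refl K _, fun i => ?_⟩
    fin_cases i <;> simp [hqp]

/-- the tuples `([e₂],[e₀],[e₁],[e₀+e₁],[p])` and `([e₂],[e₀],[e₁],[e₀+e₁],[q])`
with `p, q` generic in the line `⟨e₀,e₁⟩` are in the same `GL_4`-orbit iff `q` is a nonzero
scalar multiple of `p`. -/
theorem sameOrbit_iff_proportional_5_5 (K : Type*) [Field K]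
    (p₀ p₁ q₀ q₁ : K)
    (hp : p₀ * p₁ * (p₀ - p₁) ≠ 0) (hq : q₀ * q₁ * (q₀ - q₁) ≠ 0) :
    SameOrbit
      ![Projectivization.mk K ![0,0,1,0] (ne_zero_of_apply_ne_zero (i := 2) (by first | exact one_ne_zero | exact (show (![0,0,1,0] : Fin 4 → K) 2 = 1 from rfl) ▸ one_ne_zero | simp [Matrix.cons_val])),
        Projectivization.mk K ![1,0,0,0] (ne_zero_of_apply_ne_zero (i := 0) (by norm_num)),
        Projectivization.mk K ![0,1,0,0] (ne_zero_of_apply_ne_zero (i := 1) (by norm_num)),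
        Projectivization.mk K ![1,1,0,0] (ne_zero_of_apply_ne_zero (i := 0) (by norm_num)),
        Projectivization.mk K ![p₀,p₁,0,0] (ne_zero_of_apply_ne_zero (i := 0) (by
          simpa using left_ne_zero_of_mul (left_ne_zero_of_mul hp)))]
      ![Projectivization.mk K ![0,0,1,0] (ne_zero_of_apply_ne_zero (i := 2) (by first | exact one_ne_zero | exact (show (![0,0,1,0] : Fin 4 → K) 2 = 1 from rfl) ▸ one_ne_zero | simp [Matrix.cons_val])),
        Projectivization.mk K ![1,0,0,0] (ne_zero_of_apply_ne_zero (i := 0) (by norm_num)),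
        Projectivization.mk K ![0,1,0,0] (ne_zero_of_apply_ne_zero (i := 1) (by norm_num)),
        Projectivization.mk K ![1,1,0,0] (ne_zero_of_apply_ne_zero (i := 0) (by norm_num)),
        Projectivization.mk K ![q₀,q₁,0,0] (ne_zero_of_apply_ne_zero (i := 0) (by
          simpa using left_ne_zero_of_mul (left_ne_zero_of_mul hq)))]
    ↔ ∃ c : K, c ≠ 0 ∧ q₀ = c * p₀ ∧ q₁ = c * p₁ := by
  have hq₀ : q₀ ≠ 0 := left_ne_zero_of_mul (left_ne_zero_of_mul hq)
  have he : LinearIndependent K ![(![1,0,0,0] : Fin 4 → K), ![0,1,0,0]] := by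
    refine LinearIndependent.pair_iff.2 fun s t h => ⟨?_, ?_⟩
    · simpa using congrFun h 0
    · simpa using congrFun h 1
  rw [sameOrbit_iff_mk_eq_of_mem_span_pair _ _ _ _ _ _ he (by ext i; fin_cases i <;> simp)
    (mem_span_pair.2 ⟨p₀, p₁, by ext i; fin_cases i <;> simp⟩), mk_eq_mk_iff']
  constructor
  · rintro ⟨c, hc⟩
    have hc₀ : q₀ = c * p₀ := by simpa using (congrFun hc 0).symm
    exact ⟨c, fun h => hq₀ (by simp [hc₀, h]), hc₀, by simpa using (congrFun hc 1).symm⟩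
  · rintro ⟨c, -, rfl, rfl⟩
    exact ⟨c, by ext i; fin_cases i <;> simp⟩
end

section
/- Let v : Fin 5 → ℙ(K^4) satisfy π(v)(I) = min(|I|, 2) for every I ⊆ Fin 5 with {3,4} ⊄ I, and π(v)(I) = min(|I| − 1, 2) for every I ⊆ Fin 5 with {3,4} ⊆ I. Then there exist scalars p_0, p_1 ∈ K with p_0 p_1 (p_0 − p_1) ≠ 0 and a linear automorphism g of K^4 such that v_0 = g[e_0], v_1 = g[e_1], v_2 = g[e_0 + e_1], v_3 = g[p_0 e_0 + p_1 e_1], and v_4 = g[p_0 e_0 + p_1 e_1]. -/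
open scoped LinearAlgebra.Projectivization

/-!
The rank conditions say that `v 3 = v 4` and that `v 0, …, v 3` are four distinct points on the
line `v 0 ⊔ v 1`. Writing `v i = [uᵢ]`, `v 2 = [a u₀ + b u₁]` and `v 3 = [c u₀ + d u₁]`,
distinctness makes all four coefficients nonzero, and an automorphism with `e₀ ↦ a u₀`,
`e₁ ↦ b u₁` (complete this pair to a basis) gives the normal form with
`(p₀, p₁) = (c / a, d / b)`; `p₀ ≠ p₁` because `v 3 ≠ v 2`.
-/

open Module Projectivization

theorem Module.Basis.sumExtend_apply_inl {K V ι : Type*} [Field K] [AddCommGroup V] [Module K V]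
    {w : ι → V} (hw : LinearIndependent K w) (i : ι) : Basis.sumExtend hw (Sum.inl i) = w i := by
  simp only [Basis.sumExtend, Basis.reindex_apply, Basis.coe_extend]
  rfl

theorem LinearIndependent.exists_linearEquiv_pi_single {K V : Type*} [Field K] [AddCommGroup V]
    [Module K V] [FiniteDimensional K V] {m k : ℕ} {w : Fin m → V} (hw : LinearIndependent K w)
    (hV : finrank K V = m + k) :
    ∃ g : (Fin (m + k) → K) ≃ₗ[K] V, ∀ i, g (Pi.single (Fin.castAdd k i) 1) = w i := by
  set b := Basis.sumExtend hw
  have : Finite (Fin m ⊕ Basis.sumExtendIndex hw) := Module.Finite.finite_basis b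
  have : Finite (Basis.sumExtendIndex hw) := .of_injective _ (Sum.inr_injective (α := Fin m))
  have : Fintype (Basis.sumExtendIndex hw) := .ofFinite _
  have hcard : Fintype.card (Basis.sumExtendIndex hw) = k := by
    have := finrank_eq_card_basis b
    simp only [Fintype.card_sum, Fintype.card_fin] at this
    omega
  let e : Fin m ⊕ Basis.sumExtendIndex hw ≃ Fin (m + k) :=
    (Equiv.sumCongr (.refl _) (Fintype.equivFinOfCardEq hcard)).trans finSumFinEquiv
  refine ⟨(b.reindex e).equivFun.symm, fun i => ?_⟩
  simp [e, b, Basis.sumExtend_apply_inl]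

section RankMatrix

variable {K : Type*} [Field K] {n m : ℕ} (v : Fin m → ℙ K (Fin n → K))

theorem spanV_pair (i j : Fin m) : spanV v {i, j} = (v i).submodule ⊔ (v j).submodule := by
  simp [spanV, iSup_or, iSup_sup_eq]

theorem eq_of_rankMatrix_pair_eq_one {i j : Fin m} (h : rankMatrix v {i, j} = 1) : v i = v j := by
  have hline : ∀ k ∈ ({i, j} : Finset (Fin m)), (v k).submodule = spanV v {i, j} := fun k hk =>
    Submodule.eq_of_le_of_finrank_eq (le_biSup (fun k => (v k).submodule) hk)
      (by rw [finrank_submodule]; exact h.symm)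
  exact submodule_injective <| (hline i (by simp)).trans (hline j (by simp)).symm

theorem ne_of_rankMatrix_pair_eq_two {i j : Fin m} (h : rankMatrix v {i, j} = 2) : v i ≠ v j := by
  intro hij
  rw [rankMatrix, spanV_pair, hij, sup_idem, finrank_submodule] at h
  omega

theorem submodule_le_sup_of_rankMatrix_triple_eq {i j k : Fin m}
    (h : rankMatrix v {i, j, k} = rankMatrix v {i, j}) :
    (v k).submodule ≤ (v i).submodule ⊔ (v j).submodule := by
  have hle : spanV v {i, j} ≤ spanV v {i, j, k} :=
    biSup_mono fun _ => by simp only [Finset.mem_insert, Finset.mem_singleton]; tauto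
  rw [← spanV_pair, Submodule.eq_of_le_of_finrank_eq hle h.symm]
  exact le_biSup (fun k => (v k).submodule) (by simp)

end RankMatrix

namespace Projectivization

variable {K V : Type*} [DivisionRing K] [AddCommGroup V] [Module K V]

theorem exists_rep_eq_smul_add_smul {x y z : ℙ K V}
    (hz : z.submodule ≤ x.submodule ⊔ y.submodule) (hzx : z ≠ x) (hzy : z ≠ y) :
    ∃ a b : K, a ≠ 0 ∧ b ≠ 0 ∧ z.rep = a • x.rep + b • y.rep := by
  have hmem : z.rep ∈ x.submodule ⊔ y.submodule :=
    hz (by rw [submodule_eq]; exact Submodule.mem_span_singleton_self _)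
  rw [submodule_eq, submodule_eq, ← Submodule.span_insert] at hmem
  obtain ⟨a, b, hab⟩ := Submodule.mem_span_pair.mp hmem
  refine ⟨a, b, ?_, ?_, hab.symm⟩
  · rintro rfl
    refine hzy ?_
    rw [← z.mk_rep, ← y.mk_rep, mk_eq_mk_iff']
    exact ⟨b, by simpa using hab⟩
  · rintro rfl
    refine hzx ?_
    rw [← z.mk_rep, ← x.mk_rep, mk_eq_mk_iff']
    exact ⟨a, by simpa using hab⟩

theorem eq_mk_of_smul_eq_rep {x : ℙ K V} {w : V} (hw : w ≠ 0) {c : K} (h : c • w = x.rep) :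
    x = mk K w hw := by
  rw [← x.mk_rep, mk_eq_mk_iff']
  exact ⟨c, h⟩

end Projectivization

section NormalForm

variable {K : Type*} [Field K]

theorem LinearEquiv.map_vecFour_eq_smul_add_smul {V : Type*} [AddCommGroup V] [Module K V]
    (g : (Fin 4 → K) ≃ₗ[K] V) (s t : K) :
    g ![s, t, 0, 0] = s • g (Pi.single 0 1) + t • g (Pi.single 1 1) := by
  rw [← map_smul, ← map_smul, ← map_add]
  congr 1
  funext i
  fin_cases i <;> simp

theorem exists_normal_form_of_collinear {x₀ x₁ x₂ x₃ : ℙ K (Fin 4 → K)}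
    (h₀₁ : x₀ ≠ x₁) (h₂₀ : x₂ ≠ x₀) (h₂₁ : x₂ ≠ x₁) (h₃₀ : x₃ ≠ x₀) (h₃₁ : x₃ ≠ x₁)
    (h₃₂ : x₃ ≠ x₂) (h₂ : x₂.submodule ≤ x₀.submodule ⊔ x₁.submodule)
    (h₃ : x₃.submodule ≤ x₀.submodule ⊔ x₁.submodule) :
    ∃ p₀ p₁ : K, ∃ hp : p₀ * p₁ * (p₀ - p₁) ≠ 0,
      ∃ g : (Fin 4 → K) ≃ₗ[K] (Fin 4 → K),
        x₀ = Projectivization.mk K (g ![1,0,0,0])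
            (g.map_ne_zero_iff.mpr (ne_zero_of_apply_ne_zero (i := 0) (by norm_num))) ∧
        x₁ = Projectivization.mk K (g ![0,1,0,0])
            (g.map_ne_zero_iff.mpr (ne_zero_of_apply_ne_zero (i := 1) (by norm_num))) ∧
        x₂ = Projectivization.mk K (g ![1,1,0,0])
            (g.map_ne_zero_iff.mpr (ne_zero_of_apply_ne_zero (i := 0) (by norm_num))) ∧
        x₃ = Projectivization.mk K (g ![p₀,p₁,0,0])
            (g.map_ne_zero_iff.mpr (ne_zero_of_apply_ne_zero (i := 0) (by
              simpa using left_ne_zero_of_mul (left_ne_zero_of_mul hp)))) := by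
  obtain ⟨a, b, ha, hb, hx₂⟩ := exists_rep_eq_smul_add_smul h₂ h₂₀ h₂₁
  obtain ⟨c, d, hc, hd, hx₃⟩ := exists_rep_eq_smul_add_smul h₃ h₃₀ h₃₁
  have hind : LinearIndependent K ![a • x₀.rep, b • x₁.rep] := by
    refine LinearIndependent.pair_iff.mpr fun s t hst => ?_
    have := LinearIndependent.pair_iff.mp (linearIndependent_pair_iff_ne.mpr h₀₁) (s * a) (t * b)
      (by simpa only [mul_smul] using hst)
    simpa [ha, hb] using this
  obtain ⟨g, hg⟩ := hind.exists_linearEquiv_pi_single (m := 2) (k := 2) (by simp)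
  have hg₀ : g (Pi.single 0 1) = a • x₀.rep := hg 0
  have hg₁ : g (Pi.single 1 1) = b • x₁.rep := hg 1
  have hg : ∀ s t : K, g ![s, t, 0, 0] = (s * a) • x₀.rep + (t * b) • x₁.rep := fun s t => by
    rw [g.map_vecFour_eq_smul_add_smul, hg₀, hg₁]
    simp [mul_smul]
  have hp : c / a ≠ d / b := fun he => h₃₂ <| by
    rw [← x₂.mk_rep]
    refine eq_mk_of_smul_eq_rep _ (c := c / a) ?_
    rw [hx₂, hx₃, smul_add, smul_smul, smul_smul, div_mul_cancel₀ _ ha, he, div_mul_cancel₀ _ hb]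
  refine ⟨c / a, d / b, mul_ne_zero (mul_ne_zero (div_ne_zero hc ha) (div_ne_zero hd hb))
    (sub_ne_zero.mpr hp), g, ?_, ?_, ?_, ?_⟩
  · exact eq_mk_of_smul_eq_rep _ (c := a⁻¹) (by simp [hg, smul_smul, ha])
  · exact eq_mk_of_smul_eq_rep _ (c := b⁻¹) (by simp [hg, smul_smul, hb])
  · exact eq_mk_of_smul_eq_rep _ (c := 1) (by simp [hg, hx₂])
  · exact eq_mk_of_smul_eq_rep _ (c := 1) (by simp [hg, hx₃, ha, hb])

end NormalForm

/-- normal form for quintuples of rank type (4) with the identified pair {3,4}. -/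
theorem rank_4_normal_form (K : Type*) [Field K]
    (v : Fin 5 → ℙ K (Fin 4 → K))
    (h₁ : ∀ I : Finset (Fin 5), ¬ ({3, 4} : Finset (Fin 5)) ⊆ I →
      rankMatrix v I = min I.card 2)
    (h₂ : ∀ I : Finset (Fin 5), ({3, 4} : Finset (Fin 5)) ⊆ I →
      rankMatrix v I = min (I.card - 1) 2) :
    ∃ p₀ p₁ : K, ∃ hp : p₀ * p₁ * (p₀ - p₁) ≠ 0,
      ∃ g : (Fin 4 → K) ≃ₗ[K] (Fin 4 → K),
        v 0 = Projectivization.mk K (g ![1,0,0,0])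
            (g.map_ne_zero_iff.mpr (ne_zero_of_apply_ne_zero (i := 0) (by norm_num))) ∧
        v 1 = Projectivization.mk K (g ![0,1,0,0])
            (g.map_ne_zero_iff.mpr (ne_zero_of_apply_ne_zero (i := 1) (by norm_num))) ∧
        v 2 = Projectivization.mk K (g ![1,1,0,0])
            (g.map_ne_zero_iff.mpr (ne_zero_of_apply_ne_zero (i := 0) (by norm_num))) ∧
        v 3 = Projectivization.mk K (g ![p₀,p₁,0,0])
            (g.map_ne_zero_iff.mpr (ne_zero_of_apply_ne_zero (i := 0) (by
              simpa using left_ne_zero_of_mul (left_ne_zero_of_mul hp)))) ∧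
        v 4 = Projectivization.mk K (g ![p₀,p₁,0,0])
            (g.map_ne_zero_iff.mpr (ne_zero_of_apply_ne_zero (i := 0) (by
              simpa using left_ne_zero_of_mul (left_ne_zero_of_mul hp)))) := by
  have distinct (i j : Fin 5) (hI : ¬ ({3, 4} : Finset (Fin 5)) ⊆ {i, j}) (hij : i ≠ j) :
      v i ≠ v j :=
    ne_of_rankMatrix_pair_eq_two v <| by rw [h₁ _ hI, Finset.card_pair hij, min_self]
  have collinear (k : Fin 5) (hI : ¬ ({3, 4} : Finset (Fin 5)) ⊆ {0, 1, k})
      (hk : ({0, 1, k} : Finset (Fin 5)).card = 3) :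
      (v k).submodule ≤ (v 0).submodule ⊔ (v 1).submodule :=
    submodule_le_sup_of_rankMatrix_triple_eq v <| by rw [h₁ _ hI, h₁ _ (by decide), hk]; rfl
  have h₃₄ : v 3 = v 4 := eq_of_rankMatrix_pair_eq_one v <| by rw [h₂ _ (by decide)]; rfl
  obtain ⟨p₀, p₁, hp, g, h₀, h₁, h₂, h₃⟩ := exists_normal_form_of_collinear
    (distinct 0 1 (by decide) (by decide)) (distinct 2 0 (by decide) (by decide))
    (distinct 2 1 (by decide) (by decide)) (distinct 3 0 (by decide) (by decide))
    (distinct 3 1 (by decide) (by decide)) (distinct 3 2 (by decide) (by decide))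
    (collinear 2 (by decide) rfl) (collinear 3 (by decide) rfl)
  exact ⟨p₀, p₁, hp, g, h₀, h₁, h₂, h₃, h₃₄ ▸ h₃⟩
end

section
/- Let p_0, p_1 ∈ K with p_0 p_1 (p_0 − p_1) ≠ 0, and let w : Fin 4 → (Fin 2 → K) with w_i ≠ 0 for every i. Then p_1 · d(0,2) · d(3,1) + p_0 · d(0,3) · d(1,2) = 0 if and only if either (a) there exist a linear automorphism g of K^2 and nonzero scalars c_0, c_1, c_2, c_3 ∈ K with w_0 = c_0 · g(e_0), w_1 = c_1 · g(e_1), w_2 = c_2 · g(e_0 + e_1), w_3 = c_3 · g(p_0 e_0 + p_1 e_1), or (b) there exist three distinct indices i, j, k with d(i,j) = d(j,k) = d(i,k) = 0. -/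
/-!
Read the `w i` as points of the projective line: `d2 w i j = 0` says that `w i` and `w j` are
parallel. If `w 0` and `w 1` are independent, Cramer's rule gives
`d(0,1) • w 2 = d(2,1) • w 0 + d(0,2) • w 1` and `d(0,1) • w 3 = d(3,1) • w 0 + d(0,3) • w 1`,
and the equation says exactly that the coordinates of `w 3` are proportional to those of `w 2`
rescaled by `p₀ : p₁`. So the automorphism `e₀ ↦ d(2,1) • w 0`, `e₁ ↦ d(0,2) • w 1` carries the
standard configuration onto `w` up to scalars, provided these coefficients do not vanish. If one
of them vanishes, the equation forces a second determinant sharing an index with it to vanish, and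
three of the points coincide. If `w 0 ∥ w 1`, the Plücker relation reduces the equation to
`(p₁ - p₀) d(0,2) d(3,1) = 0`, again giving three coinciding points.
-/

/-- The 2×2 determinant of the columns `w i` and `w j`. -/
def d2 {K : Type*} [Field K] {m : ℕ} (w : Fin m → Fin 2 → K) (i j : Fin m) : K :=
  w i 0 * w j 1 - w i 1 * w j 0

section

variable {K : Type*} [Field K]

section Determinant

variable {m : ℕ} (w : Fin m → Fin 2 → K)

lemma d2_swap (i j : Fin m) : d2 w j i = -d2 w i j := by
  unfold d2; ring

lemma d2_eq_zero_comm {i j : Fin m} : d2 w j i = 0 ↔ d2 w i j = 0 := by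
  rw [d2_swap, neg_eq_zero]

lemma d2_pluecker (i j k l : Fin m) :
    d2 w i j * d2 w k l - d2 w i k * d2 w j l + d2 w i l * d2 w j k = 0 := by
  unfold d2; ring

lemma d2_smul_eq_add (i j k : Fin m) :
    d2 w i j • w k = d2 w k j • w i + d2 w i k • w j := by
  ext c
  fin_cases c <;>
    simp only [d2, Pi.smul_apply, Pi.add_apply, smul_eq_mul, Fin.zero_eta, Fin.mk_one] <;> ring

lemma d2_eq_zero_trans {i j k : Fin m} (hk : w k ≠ 0) (hik : d2 w i k = 0)
    (hkj : d2 w k j = 0) : d2 w i j = 0 := by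
  have h := d2_smul_eq_add w i j k
  rw [hik, hkj, zero_smul, zero_smul, add_zero, smul_eq_zero] at h
  exact h.resolve_right hk

def HasParallelTriple : Prop :=
  ∃ i j k : Fin m, i ≠ j ∧ j ≠ k ∧ i ≠ k ∧ d2 w i j = 0 ∧ d2 w j k = 0 ∧ d2 w i k = 0

variable {w} in
lemma HasParallelTriple.of_d2_eq_zero {i j k : Fin m} (hij : i ≠ j) (hjk : j ≠ k) (hik : i ≠ k)
    (hj : w j ≠ 0) (h₁ : d2 w i j = 0) (h₂ : d2 w j k = 0) : HasParallelTriple w :=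
  ⟨i, j, k, hij, hjk, hik, h₁, h₂, d2_eq_zero_trans w hj h₁ h₂⟩

end Determinant

lemma exists_linearEquiv_apply_vecCons (u v : Fin 2 → K) (h : d2 ![u, v] 0 1 ≠ 0) :
    ∃ g : (Fin 2 → K) ≃ₗ[K] (Fin 2 → K), ∀ a b : K, g ![a, b] = a • u + b • v := by
  let f : (Fin 2 → K) →ₗ[K] (Fin 2 → K) :=
    (LinearMap.proj 0).smulRight u + (LinearMap.proj 1).smulRight v
  have hf : Function.Injective f := by
    rw [← LinearMap.ker_eq_bot, LinearMap.ker_eq_bot']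
    intro x hx
    have h0 := congrFun hx 0
    have h1 := congrFun hx 1
    simp only [f, d2, LinearMap.add_apply, LinearMap.coe_smulRight, LinearMap.coe_proj,
      Function.eval, Pi.add_apply, Pi.smul_apply, smul_eq_mul, Pi.zero_apply, Matrix.cons_val_zero,
      Matrix.cons_val_one] at h0 h1 h
    have hx0 : x 0 * (u 0 * v 1 - u 1 * v 0) = 0 := by linear_combination v 1 * h0 - v 0 * h1
    have hx1 : x 1 * (u 0 * v 1 - u 1 * v 0) = 0 := by linear_combination u 0 * h1 - u 1 * h0
    ext c; fin_cases c
    · exact (mul_eq_zero.mp hx0).resolve_right h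
    · exact (mul_eq_zero.mp hx1).resolve_right h
  refine ⟨LinearEquiv.ofInjectiveEndo f hf, fun a b => ?_⟩
  simp [f]

lemma map_vec2 {M F : Type*} [AddCommGroup M] [Module K M] [FunLike F (Fin 2 → K) M]
    [LinearMapClass F K (Fin 2 → K) M] (g : F) (a b : K) :
    g ![a, b] = a • g ![1, 0] + b • g ![0, 1] := by
  rw [← map_smul, ← map_smul, ← map_add]
  congr 1
  ext c; fin_cases c <;> simp

section Configuration

variable (p₀ p₁ : K) (w : Fin 4 → Fin 2 → K)

def orbitForm : K := p₁ * d2 w 0 2 * d2 w 3 1 + p₀ * d2 w 0 3 * d2 w 1 2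

variable {p₀ p₁ w}

lemma orbitForm_eq_zero_of_hasParallelTriple (h : HasParallelTriple w) : orbitForm p₀ p₁ w = 0 := by
  obtain ⟨i, j, k, hij, hjk, hik, h₁, h₂, h₃⟩ := h
  have h₁' := (d2_eq_zero_comm w).2 h₁
  have h₂' := (d2_eq_zero_comm w).2 h₂
  have h₃' := (d2_eq_zero_comm w).2 h₃
  unfold orbitForm
  -- every 3-subset of `{0, 1, 2, 3}` contains an index pair of each of the two products
  fin_cases i <;> fin_cases j <;> fin_cases k <;> simp_all

lemma orbitForm_eq_zero_of_eq_smul {u v : Fin 2 → K} {c₀ c₁ c₂ c₃ : K}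
    (h₀ : w 0 = c₀ • u) (h₁ : w 1 = c₁ • v) (h₂ : w 2 = c₂ • (u + v))
    (h₃ : w 3 = c₃ • (p₀ • u + p₁ • v)) : orbitForm p₀ p₁ w = 0 := by
  simp only [orbitForm, d2, h₀, h₁, h₂, h₃, Pi.smul_apply, Pi.add_apply, smul_eq_mul]
  ring

lemma hasParallelTriple_of_orbitForm_of_d2_eq_zero (hp : p₀ ≠ p₁) (hw : ∀ i, w i ≠ 0)
    (hE : orbitForm p₀ p₁ w = 0) (hD : d2 w 0 1 = 0) : HasParallelTriple w := by
  have hfactor : (p₁ - p₀) * (d2 w 0 2 * d2 w 3 1) = 0 := by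
    rw [orbitForm] at hE
    linear_combination hE - p₀ * d2_pluecker w 0 1 2 3 + p₀ * d2 w 2 3 * hD
      - p₀ * d2 w 0 2 * d2_swap w 3 1
  rcases mul_eq_zero.mp ((mul_eq_zero.mp hfactor).resolve_left (sub_ne_zero.2 hp.symm)) with h | h
  · exact .of_d2_eq_zero (i := 1) (j := 0) (k := 2) (by decide) (by decide) (by decide) (hw 0)
      ((d2_eq_zero_comm w).2 hD) h
  · exact .of_d2_eq_zero (i := 0) (j := 1) (k := 3) (by decide) (by decide) (by decide) (hw 1)
      hD ((d2_eq_zero_comm w).2 h)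

lemma hasParallelTriple_of_orbitForm_of_degenerate (hp₀ : p₀ ≠ 0) (hp₁ : p₁ ≠ 0)
    (hw : ∀ i, w i ≠ 0) (hE : orbitForm p₀ p₁ w = 0) (hD : d2 w 0 1 ≠ 0)
    (hdeg : d2 w 0 2 = 0 ∨ d2 w 1 2 = 0 ∨ d2 w 3 1 = 0) : HasParallelTriple w := by
  have hpar₂ : d2 w 0 2 = 0 → d2 w 1 2 ≠ 0 := fun h₀₂ h₁₂ =>
    hD (d2_eq_zero_trans w (hw 2) h₀₂ ((d2_eq_zero_comm w).2 h₁₂))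
  have hpar₃ : d2 w 0 3 = 0 → d2 w 3 1 ≠ 0 := fun h₀₃ h₃₁ =>
    hD (d2_eq_zero_trans w (hw 3) h₀₃ h₃₁)
  unfold orbitForm at hE
  rcases hdeg with h | h | h
  · have : d2 w 0 3 = 0 := by simpa [h, hp₀, hpar₂ h] using hE
    exact .of_d2_eq_zero (i := 2) (j := 0) (k := 3) (by decide) (by decide) (by decide) (hw 0)
      ((d2_eq_zero_comm w).2 h) this
  · have h₀₂ : d2 w 0 2 ≠ 0 := fun h₀₂ => hpar₂ h₀₂ h
    have : d2 w 3 1 = 0 := by simpa [h, hp₁, h₀₂] using hE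
    exact .of_d2_eq_zero (i := 2) (j := 1) (k := 3) (by decide) (by decide) (by decide) (hw 1)
      ((d2_eq_zero_comm w).2 h) ((d2_eq_zero_comm w).2 this)
  · have h₀₃ : d2 w 0 3 ≠ 0 := fun h₀₃ => hpar₃ h₀₃ h
    have : d2 w 1 2 = 0 := by simpa [h, hp₀, h₀₃] using hE
    exact .of_d2_eq_zero (i := 2) (j := 1) (k := 3) (by decide) (by decide) (by decide) (hw 1)
      ((d2_eq_zero_comm w).2 this) ((d2_eq_zero_comm w).2 h)

lemma exists_linearEquiv_of_orbitForm_eq_zero (hp₀ : p₀ ≠ 0) (hE : orbitForm p₀ p₁ w = 0)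
    (hD : d2 w 0 1 ≠ 0) (h₀₂ : d2 w 0 2 ≠ 0) (h₁₂ : d2 w 1 2 ≠ 0) (h₃₁ : d2 w 3 1 ≠ 0) :
    ∃ g : (Fin 2 → K) ≃ₗ[K] (Fin 2 → K), ∃ c₀ c₁ c₂ c₃ : K,
      c₀ ≠ 0 ∧ c₁ ≠ 0 ∧ c₂ ≠ 0 ∧ c₃ ≠ 0 ∧
      w 0 = c₀ • g ![1, 0] ∧ w 1 = c₁ • g ![0, 1] ∧
      w 2 = c₂ • g ![1, 1] ∧ w 3 = c₃ • g ![p₀, p₁] := by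
  have h₂₁ : d2 w 2 1 ≠ 0 := by rwa [d2_swap, neg_ne_zero]
  obtain ⟨g, hg⟩ := exists_linearEquiv_apply_vecCons (d2 w 2 1 • w 0) (d2 w 0 2 • w 1) (by
    have : d2 ![d2 w 2 1 • w 0, d2 w 0 2 • w 1] 0 1 = d2 w 2 1 * d2 w 0 2 * d2 w 0 1 := by
      simp only [d2, Matrix.cons_val_zero, Matrix.cons_val_one, Pi.smul_apply, smul_eq_mul]
      ring
    rw [this]; exact mul_ne_zero (mul_ne_zero h₂₁ h₀₂) hD)
  have h₂ := d2_smul_eq_add w 0 1 2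
  have h₃ := d2_smul_eq_add w 0 1 3
  refine ⟨g, (d2 w 2 1)⁻¹, (d2 w 0 2)⁻¹, (d2 w 0 1)⁻¹, d2 w 3 1 / (d2 w 0 1 * p₀ * d2 w 2 1),
    inv_ne_zero h₂₁, inv_ne_zero h₀₂, inv_ne_zero hD, by simp [hD, hp₀, h₂₁, h₃₁],
    ?_, ?_, ?_, ?_⟩ <;> rw [hg]
  · simp [h₂₁]
  · simp [h₀₂]
  · rw [one_smul, one_smul, ← h₂, inv_smul_smul₀ hD]
  · have h₃' : w 3 = (d2 w 0 1)⁻¹ • (d2 w 3 1 • w 0 + d2 w 0 3 • w 1) := by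
      rw [← h₃, inv_smul_smul₀ hD]
    have e₀ : d2 w 3 1 / (d2 w 0 1 * p₀ * d2 w 2 1) * p₀ * d2 w 2 1 = d2 w 3 1 / d2 w 0 1 := by
      field_simp
    -- the equation, read as `p₁ d(0,2) d(3,1) = p₀ d(2,1) d(0,3)`
    have e₁ : d2 w 3 1 / (d2 w 0 1 * p₀ * d2 w 2 1) * p₁ * d2 w 0 2 = d2 w 0 3 / d2 w 0 1 := by
      rw [orbitForm, ← neg_neg (d2 w 1 2), ← d2_swap] at hE
      field_simp
      linear_combination hE
    linear_combination (norm := module) h₃' - e₀ • w 0 - e₁ • w 1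

end Configuration

end

theorem vanishing_iff_rank_4_general (K : Type*) [Field K]
    (p₀ p₁ : K) (hp : p₀ * p₁ * (p₀ - p₁) ≠ 0)
    (w : Fin 4 → Fin 2 → K) (hw : ∀ i, w i ≠ 0) :
    p₁ * d2 w 0 2 * d2 w 3 1 + p₀ * d2 w 0 3 * d2 w 1 2 = 0 ↔
      ((∃ g : (Fin 2 → K) ≃ₗ[K] (Fin 2 → K), ∃ c₀ c₁ c₂ c₃ : K,
          c₀ ≠ 0 ∧ c₁ ≠ 0 ∧ c₂ ≠ 0 ∧ c₃ ≠ 0 ∧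
          w 0 = c₀ • g ![1, 0] ∧ w 1 = c₁ • g ![0, 1] ∧
          w 2 = c₂ • g ![1, 1] ∧ w 3 = c₃ • g ![p₀, p₁]) ∨
       (∃ i j k : Fin 4, i ≠ j ∧ j ≠ k ∧ i ≠ k ∧
          d2 w i j = 0 ∧ d2 w j k = 0 ∧ d2 w i k = 0)) := by
  obtain ⟨⟨hp₀, hp₁⟩, hp₀₁⟩ : (p₀ ≠ 0 ∧ p₁ ≠ 0) ∧ p₀ ≠ p₁ := by
    simpa only [mul_ne_zero_iff, sub_ne_zero] using hp
  refine ⟨fun hE => ?_, ?_⟩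
  · by_cases hD : d2 w 0 1 = 0
    · exact .inr (hasParallelTriple_of_orbitForm_of_d2_eq_zero hp₀₁ hw hE hD)
    by_cases hdeg : d2 w 0 2 = 0 ∨ d2 w 1 2 = 0 ∨ d2 w 3 1 = 0
    · exact .inr (hasParallelTriple_of_orbitForm_of_degenerate hp₀ hp₁ hw hE hD hdeg)
    simp only [not_or] at hdeg
    exact .inl (exists_linearEquiv_of_orbitForm_eq_zero hp₀ hE hD hdeg.1 hdeg.2.1 hdeg.2.2)
  · rintro (⟨g, c₀, c₁, c₂, c₃, -, -, -, -, h₀, h₁, h₂, h₃⟩ | h)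
    · refine orbitForm_eq_zero_of_eq_smul (c₂ := c₂) (c₃ := c₃) h₀ h₁ ?_ ?_
      · rw [h₂, map_vec2 g, one_smul, one_smul]
      · rw [h₃, map_vec2 g]
    · exact orbitForm_eq_zero_of_hasParallelTriple h

/-- vanishing of `p₁·d(0,2)·d(3,1) + p₀·d(0,3)·d(1,2)` characterises the closure
of the orbit of `(e₀, e₁, e₀+e₁, p₀e₀+p₁e₁)`. -/
theorem vanishing_iff_rank_4 (K : Type*) [Field K] [IsAlgClosed K] [CharZero K]
    (p₀ p₁ : K) (hp : p₀ * p₁ * (p₀ - p₁) ≠ 0)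
    (w : Fin 4 → Fin 2 → K) (hw : ∀ i, w i ≠ 0) :
    p₁ * d2 w 0 2 * d2 w 3 1 + p₀ * d2 w 0 3 * d2 w 1 2 = 0 ↔
      ((∃ g : (Fin 2 → K) ≃ₗ[K] (Fin 2 → K), ∃ c₀ c₁ c₂ c₃ : K,
          c₀ ≠ 0 ∧ c₁ ≠ 0 ∧ c₂ ≠ 0 ∧ c₃ ≠ 0 ∧
          w 0 = c₀ • g ![1, 0] ∧ w 1 = c₁ • g ![0, 1] ∧
          w 2 = c₂ • g ![1, 1] ∧ w 3 = c₃ • g ![p₀, p₁]) ∨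
       (∃ i j k : Fin 4, i ≠ j ∧ j ≠ k ∧ i ≠ k ∧
          d2 w i j = 0 ∧ d2 w j k = 0 ∧ d2 w i k = 0)) :=
  vanishing_iff_rank_4_general K p₀ p₁ hp w hw
end

section
/- Let p_0, p_1, p_2 ∈ K with p_0 p_1 p_2 (p_0 − p_1)(p_1 − p_2)(p_2 − p_0) ≠ 0, and let w : Fin 5 → (Fin 3 → K) be such that every three distinct columns are linearly independent, i.e. D(i,j,k) ≠ 0 for all distinct i, j, k. Then the five quantities p_2·D(0,1,3)·D(0,4,2) + p_1·D(0,1,4)·D(0,2,3), p_2·D(1,0,3)·D(1,4,2) + p_0·D(1,0,4)·D(1,2,3), p_1·D(2,0,3)·D(2,4,1) + p_0·D(2,0,4)·D(2,1,3), (p_1 − p_2)·D(3,0,2)·D(3,4,1) + (p_0 − p_2)·D(3,0,4)·D(3,1,2), and p_0(p_1 − p_2)·D(4,0,2)·D(4,3,1) + p_1(p_0 − p_2)·D(4,0,3)·D(4,1,2) all vanish if and only if there exist a linear automorphism g of K^3 and nonzero scalars c_0, …, c_4 ∈ K with w_0 = c_0 · g(e_0), w_1 = c_1 · g(e_1), w_2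 = c_2 · g(e_2), w_3 = c_3 · g(e_0 + e_1 + e_2), and w_4 = c_4 · g(p_0 e_0 + p_1 e_1 + p_2 e_2). -/
/-- The 3×3 determinant of the matrix whose columns are `w i`, `w j`, `w k` (in this order). -/
noncomputable def D3 {K : Type*} [Field K] {m : ℕ} (w : Fin m → Fin 3 → K)
    (i j k : Fin m) : K :=
  Matrix.det (Matrix.of fun a b => ![w i, w j, w k] b a)

lemma D3_eq {K : Type*} [Field K] {m : ℕ} (w : Fin m → Fin 3 → K) (i j k : Fin m) :
    D3 w i j k = w i 0 * w j 1 * w k 2 - w i 0 * w k 1 * w j 2 - w j 0 * w i 1 * w k 2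
      + w j 0 * w k 1 * w i 2 + w k 0 * w i 1 * w j 2 - w k 0 * w j 1 * w i 2 := by
  simp [D3, Matrix.det_fin_three]

/-- for a quintuple of vectors of `K³` in general position, the simultaneous
vanishing of the five listed polynomials characterises the orbit of
`(e₀, e₁, e₂, e₀+e₁+e₂, p₀e₀+p₁e₁+p₂e₂)`. -/
theorem vanishing_iff_rank_5_10 (K : Type*) [Field K] [IsAlgClosed K] [CharZero K]
    (p₀ p₁ p₂ : K)
    (hp : p₀ * p₁ * p₂ * (p₀ - p₁) * (p₁ - p₂) * (p₂ - p₀) ≠ 0)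
    (w : Fin 5 → Fin 3 → K)
    (hw : ∀ i j k : Fin 5, i ≠ j → j ≠ k → i ≠ k → D3 w i j k ≠ 0) :
    (p₂ * D3 w 0 1 3 * D3 w 0 4 2 + p₁ * D3 w 0 1 4 * D3 w 0 2 3 = 0 ∧
     p₂ * D3 w 1 0 3 * D3 w 1 4 2 + p₀ * D3 w 1 0 4 * D3 w 1 2 3 = 0 ∧
     p₁ * D3 w 2 0 3 * D3 w 2 4 1 + p₀ * D3 w 2 0 4 * D3 w 2 1 3 = 0 ∧
     (p₁ - p₂) * D3 w 3 0 2 * D3 w 3 4 1 + (p₀ - p₂) * D3 w 3 0 4 * D3 w 3 1 2 = 0 ∧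
     p₀ * (p₁ - p₂) * D3 w 4 0 2 * D3 w 4 3 1 + p₁ * (p₀ - p₂) * D3 w 4 0 3 * D3 w 4 1 2 = 0)
    ↔ ∃ g : (Fin 3 → K) ≃ₗ[K] (Fin 3 → K), ∃ c₀ c₁ c₂ c₃ c₄ : K,
        c₀ ≠ 0 ∧ c₁ ≠ 0 ∧ c₂ ≠ 0 ∧ c₃ ≠ 0 ∧ c₄ ≠ 0 ∧
        w 0 = c₀ • g ![1, 0, 0] ∧ w 1 = c₁ • g ![0, 1, 0] ∧ w 2 = c₂ • g ![0, 0, 1] ∧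
        w 3 = c₃ • g ![1, 1, 1] ∧ w 4 = c₄ • g ![p₀, p₁, p₂] := by
  have hp₀ : p₀ ≠ 0 := fun h => hp (by rw [h]; ring)
  have hp₁ : p₁ ≠ 0 := fun h => hp (by rw [h]; ring)
  have hp₂ : p₂ ≠ 0 := fun h => hp (by rw [h]; ring)
  constructor
  · rintro ⟨h0, h1, -, -, -⟩
    have hΔ : D3 w 0 1 2 ≠ 0 := hw 0 1 2 (by decide) (by decide) (by decide)
    set N : Matrix (Fin 3) (Fin 3) K := Matrix.of fun a b => ![w 0, w 1, w 2] b a with hN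
    have hNdet : N.det ≠ 0 := hΔ
    have hinv : Invertible N := N.invertibleOfIsUnitDet (isUnit_iff_ne_zero.2 hNdet)
    set v3 : Fin 3 → K := (⅟N).mulVec (w 3) with hv3
    set v4 : Fin 3 → K := (⅟N).mulVec (w 4) with hv4
    have h3 : N.mulVec v3 = w 3 := by
      rw [hv3, Matrix.mulVec_mulVec, mul_invOf_self, Matrix.one_mulVec]
    have h4 : N.mulVec v4 = w 4 := by
      rw [hv4, Matrix.mulVec_mulVec, mul_invOf_self, Matrix.one_mulVec]
    set a := v3 0; set b := v3 1; set c := v3 2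
    set α := v4 0; set β := v4 1; set γ := v4 2
    have hw3 : ∀ i, w 3 i = a * w 0 i + b * w 1 i + c * w 2 i := by
      intro i; rw [← h3]
      simp [Matrix.mulVec, dotProduct, Fin.sum_univ_three, hN]; ring
    have hw4 : ∀ i, w 4 i = α * w 0 i + β * w 1 i + γ * w 2 i := by
      intro i; rw [← h4]
      simp [Matrix.mulVec, dotProduct, Fin.sum_univ_three, hN]; ring
    -- determinant identities
    have dA1 : D3 w 0 1 3 = c * D3 w 0 1 2 := by simp only [D3_eq, hw3]; ring
    have dA2 : D3 w 0 2 3 = -(b * D3 w 0 1 2) := by simp only [D3_eq, hw3]; ring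
    have dA3 : D3 w 1 2 3 = a * D3 w 0 1 2 := by simp only [D3_eq, hw3]; ring
    have dA4 : D3 w 1 0 3 = -(c * D3 w 0 1 2) := by simp only [D3_eq, hw3]; ring
    have dB1 : D3 w 0 1 4 = γ * D3 w 0 1 2 := by simp only [D3_eq, hw4]; ring
    have dB2 : D3 w 0 4 2 = β * D3 w 0 1 2 := by simp only [D3_eq, hw4]; ring
    have dB3 : D3 w 1 4 2 = -(α * D3 w 0 1 2) := by simp only [D3_eq, hw4]; ring
    have dB4 : D3 w 1 0 4 = -(γ * D3 w 0 1 2) := by simp only [D3_eq, hw4]; ring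
    -- nonvanishing of coefficients
    have ha : a ≠ 0 := by
      intro h; exact hw 1 2 3 (by decide) (by decide) (by decide) (by rw [dA3, h, zero_mul])
    have hb : b ≠ 0 := by
      intro h
      exact hw 0 2 3 (by decide) (by decide) (by decide) (by rw [dA2, h, zero_mul, neg_zero])
    have hc : c ≠ 0 := by
      intro h; exact hw 0 1 3 (by decide) (by decide) (by decide) (by rw [dA1, h, zero_mul])
    have hα : α ≠ 0 := by
      intro h
      exact hw 1 4 2 (by decide) (by decide) (by decide) (by rw [dB3, h, zero_mul, neg_zero])
    have hβ : β ≠ 0 := by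
      intro h; exact hw 0 4 2 (by decide) (by decide) (by decide) (by rw [dB2, h, zero_mul])
    have hγ : γ ≠ 0 := by
      intro h; exact hw 0 1 4 (by decide) (by decide) (by decide) (by rw [dB1, h, zero_mul])
    -- the two relations coming from the first two equations
    rw [dA1, dA2, dB1, dB2] at h0
    rw [dA4, dA3, dB3, dB4] at h1
    have rel0 : p₂ * c * β - p₁ * b * γ = 0 := by
      have key : (p₂ * c * β - p₁ * b * γ) * (D3 w 0 1 2 * D3 w 0 1 2) = 0 := by
        linear_combination h0
      exact (mul_eq_zero.mp key).resolve_right (mul_ne_zero hΔ hΔ)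
    have rel1 : p₂ * c * α - p₀ * a * γ = 0 := by
      have key : (p₂ * c * α - p₀ * a * γ) * (D3 w 0 1 2 * D3 w 0 1 2) = 0 := by
        linear_combination h1
      exact (mul_eq_zero.mp key).resolve_right (mul_ne_zero hΔ hΔ)
    -- build the linear automorphism
    set G : Matrix (Fin 3) (Fin 3) K :=
      Matrix.of fun i j => ![fun i => a * w 0 i, fun i => b * w 1 i, fun i => c * w 2 i] j i
      with hG
    have hGdet : G.det = a * b * c * D3 w 0 1 2 := by
      rw [D3_eq, Matrix.det_fin_three]; simp [hG]; ring
    have hinvG : Invertible G := G.invertibleOfIsUnitDet (isUnit_iff_ne_zero.2 (by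
      rw [hGdet]; exact mul_ne_zero (mul_ne_zero (mul_ne_zero ha hb) hc) hΔ))
    set g := G.toLinearEquiv' hinvG with hgdef
    have hg : ∀ v : Fin 3 → K, ∀ i, g v i
        = v 0 * (a * w 0 i) + v 1 * (b * w 1 i) + v 2 * (c * w 2 i) := by
      intro v i
      show Matrix.toLin' G v i = _
      rw [Matrix.toLin'_apply]
      simp [Matrix.mulVec, dotProduct, Fin.sum_univ_three, hG]; ring
    set c₄ := γ * (p₂ * c)⁻¹ with hc₄def
    have hpc : p₂ * c ≠ 0 := mul_ne_zero hp₂ hc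
    have hc₄ : c₄ ≠ 0 := mul_ne_zero hγ (inv_ne_zero hpc)
    have key0 : c₄ * (p₀ * a) = α := by
      rw [hc₄def]; field_simp; linear_combination -rel1
    have key1 : c₄ * (p₁ * b) = β := by
      rw [hc₄def]; field_simp; linear_combination -rel0
    have key2 : c₄ * (p₂ * c) = γ := by
      rw [hc₄def]; field_simp
    refine ⟨g, a⁻¹, b⁻¹, c⁻¹, 1, c₄, inv_ne_zero ha, inv_ne_zero hb, inv_ne_zero hc,
      one_ne_zero, hc₄, ?_, ?_, ?_, ?_, ?_⟩
    · funext i; rw [Pi.smul_apply, hg]; simp; field_simp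
    · funext i; rw [Pi.smul_apply, hg]; simp; field_simp
    · funext i; rw [Pi.smul_apply, hg]; simp; field_simp
    · funext i; rw [Pi.smul_apply, hg, hw3 i]; simp
    · funext i
      rw [Pi.smul_apply, hg, hw4 i]
      simp only [Matrix.cons_val_zero, Matrix.cons_val_one, Matrix.head_cons,
        Matrix.cons_val_two, Matrix.tail_cons, smul_eq_mul]
      linear_combination (w 0 i) * key0.symm + (w 1 i) * key1.symm + (w 2 i) * key2.symm
  · rintro ⟨g, c₀, c₁, c₂, c₃, c₄, -, -, -, -, -, e0, e1, e2, e3, e4⟩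
    have hsum : g ![1, 1, 1] = g ![1, 0, 0] + g ![0, 1, 0] + g ![0, 0, 1] := by
      rw [← map_add, ← map_add]; congr 1; funext i; fin_cases i <;> simp
    have hpv : g ![p₀, p₁, p₂] = p₀ • g ![1, 0, 0] + p₁ • g ![0, 1, 0] + p₂ • g ![0, 0, 1] := by
      rw [← map_smul, ← map_smul, ← map_smul, ← map_add, ← map_add]
      congr 1; funext i; fin_cases i <;> simp
    refine ⟨?_, ?_, ?_, ?_, ?_⟩ <;>
    · simp only [D3_eq, e0, e1, e2, e3, e4, hsum, hpv, Pi.smul_apply, Pi.add_apply, smul_eq_mul]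
      ring
end

section
/- Let v : Fin m → ℙ(K^n) and let {I_1, …, I_l} be a partition of Fin m into nonempty subsets such that the family of subspaces (span_v(I_k))_{k=1,…,l} is independent (their sum is a direct sum) and, for each k, the restricted tuple (v_i)_{i ∈ I_k} is essentially indecomposable, i.e. there is no partition I_k = A ⊔ B with A, B nonempty and span_v(A) ∩ span_v(B) = {0}. Then: (a) π(v)(I) = Σ_{k=1}^{l} π(v)(I ∩ I_k) for every I ⊆ Fin m; and (b) for each k and each partition I_k = A ⊔ B with A, B nonempty, there exists I ⊆ I_k with π(v)(I) ≠ π(v)(I ∩ A) + π(v)(I ∩ B). -/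
open scoped LinearAlgebra.Projectivization

lemma spanV_mono_s19 {K : Type*} [Field K] {n m : ℕ}
    (v : Fin m → ℙ K (Fin n → K)) {A B : Finset (Fin m)} (h : A ⊆ B) :
    spanV v A ≤ spanV v B := by
  refine iSup_mono fun i => ?_
  exact iSup_mono' fun hi => ⟨h hi, le_rfl⟩

lemma finrank_iSup_of_indep {K V : Type*} [Field K] [AddCommGroup V] [Module K V]
    [FiniteDimensional K V] {ι : Type*} (W : ι → Submodule K V) (hindep : iSupIndep W)
    (s : Finset ι) :
    Module.finrank K (⨆ k ∈ s, W k : Submodule K V) = ∑ k ∈ s, Module.finrank K (W k) := by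
  classical
  induction s using Finset.induction_on with
  | empty => simp
  | @insert a s ha ih =>
    rw [Finset.sum_insert ha, ← ih]
    have h1 : (⨆ k ∈ insert a s, W k : Submodule K V) = W a ⊔ ⨆ k ∈ s, W k := by
      simp [Finset.mem_insert, iSup_or, iSup_sup_eq]
    have h2 : W a ⊓ (⨆ k ∈ s, W k) = ⊥ := by
      have := hindep a
      rw [disjoint_iff] at this
      have hle : (⨆ k ∈ s, W k : Submodule K V) ≤ ⨆ k ≠ a, W k := by
        refine iSup_mono fun k => ?_
        exact iSup_mono' fun hk => ⟨fun h => ha (h ▸ hk), le_rfl⟩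
      exact le_bot_iff.mp (this ▸ inf_le_inf_left (W a) hle)
    have := Submodule.finrank_sup_add_finrank_inf_eq (W a) (⨆ k ∈ s, W k)
    rw [h2] at this
    simp only [finrank_bot, add_zero] at this
    rw [h1, this]

/-- an indecomposable splitting of a tuple `v` yields an additive decomposition
of the rank matrix of `v` into indecomposable restrictions. -/
theorem splitting_rankMatrix (K : Type*) [Field K] [IsAlgClosed K] [CharZero K]
    {n m l : ℕ} (v : Fin m → ℙ K (Fin n → K)) (I : Fin l → Finset (Fin m))
    (hne : ∀ k, I k ≠ ∅)
    (hdisj : ∀ k k', k ≠ k' → Disjoint (I k) (I k'))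
    (hcover : Finset.univ.biUnion I = Finset.univ)
    (hindep : iSupIndep fun k => spanV v (I k))
    (hessind : ∀ k, ∀ A B : Finset (Fin m), A ∪ B = I k → Disjoint A B →
      A ≠ ∅ → B ≠ ∅ → spanV v A ⊓ spanV v B ≠ ⊥) :
    (∀ S : Finset (Fin m), rankMatrix v S = ∑ k, rankMatrix v (S ∩ I k)) ∧
    (∀ k, ∀ A B : Finset (Fin m), A ∪ B = I k → Disjoint A B → A ≠ ∅ → B ≠ ∅ →
      ∃ S ⊆ I k, rankMatrix v S ≠ rankMatrix v (S ∩ A) + rankMatrix v (S ∩ B)) := by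
  constructor
  · intro S
    have hS : S = Finset.univ.biUnion (fun k => S ∩ I k) := by
      ext i
      simp only [Finset.mem_biUnion, Finset.mem_inter, Finset.mem_univ, true_and]
      constructor
      · intro hi
        have : i ∈ Finset.univ.biUnion I := by rw [hcover]; exact Finset.mem_univ i
        rcases Finset.mem_biUnion.mp this with ⟨k, _, hk⟩
        exact ⟨k, hi, hk⟩
      · rintro ⟨k, hi, _⟩; exact hi
    have hspan : spanV v S = ⨆ k ∈ Finset.univ, spanV v (S ∩ I k) := by
      conv_lhs => rw [hS]
      rw [spanV, Finset.iSup_biUnion]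
      simp [spanV]
    have hindep' : iSupIndep fun k => spanV v (S ∩ I k) :=
      hindep.mono fun k => spanV_mono_s19 v (Finset.inter_subset_right)
    have := finrank_iSup_of_indep (fun k => spanV v (S ∩ I k)) hindep' Finset.univ
    rw [rankMatrix, hspan, this]
    simp [rankMatrix]
  · intro k A B hAB hABdisj hA hB
    refine ⟨I k, le_rfl, ?_⟩
    have hAk : I k ∩ A = A := by rw [← hAB]; exact Finset.inter_eq_right.mpr Finset.subset_union_left
    have hBk : I k ∩ B = B := by rw [← hAB]; exact Finset.inter_eq_right.mpr Finset.subset_union_right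
    rw [hAk, hBk]
    have hsup : spanV v (I k) = spanV v A ⊔ spanV v B := by
      rw [← hAB, spanV, spanV, spanV]
      simp [Finset.mem_union, iSup_or, iSup_sup_eq]
    have key := Submodule.finrank_sup_add_finrank_inf_eq (spanV v A) (spanV v B)
    have hpos : 0 < Module.finrank K ↑(spanV v A ⊓ spanV v B) := by
      rw [Module.finrank_pos_iff, Submodule.nontrivial_iff_ne_bot]
      exact hessind k A B hAB hABdisj hA hB
    rw [rankMatrix, rankMatrix, rankMatrix, hsup]
    omega
end
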